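/- arXiv:math/0310112 — 6 statements merged into one kernel-verified Lean document; each statement's English description precedes it below -/
import Mathlib

section
/- Let G₁, G₂, H be groups with monomorphisms φᵢ : H → Gᵢ for i = 1, 2, and let G = G₁ *_H G₂ be the amalgamated free product. Suppose g₁ ∈ G₁ \ H, g₂ ∈ G₂ \ H and h ∈ H with h ≠ 1 satisfy (i) g₁⁻¹ H g₁ ∩ H = {1} (inside G₁), and (ii) g₂ h ≠ h g₂ (inside G₂). Then the elements h g₁ g₂ and h g₂ g₁ are not conjugate in G. -/
open Monoid PushoutI PushoutI.NormalWord Function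
open scoped Classical

section Helpers

variable {H : Type} [Group H] {G : Bool → Type} [∀ b, Group (G b)]
  {φ : ∀ b, H →* G b} (hφ : ∀ b, Function.Injective (φ b)) (d : Transversal φ)

-- membership in the transversal and in the range forces 1
lemma mem_set_range_eq_one {b : Bool} {g : G b} (h1 : g ∈ d.set b)
    (h2 : g ∈ (φ b).range) : g = 1 := by
  have hcompl := d.compl b
  have h1' : (1 : G b) ∈ d.set b := d.one_mem b
  have := (Subgroup.IsComplement.existsUnique hcompl g).unique
    (y₁ := (⟨⟨g, h2⟩, ⟨1, h1'⟩⟩ : ((φ b).range : Set (G b)) × (d.set b)))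
    (y₂ := (⟨⟨1, Subgroup.one_mem _⟩, ⟨g, h1⟩⟩)) (by simp) (by simp)
  have := congrArg (fun p => (p.1 : G b)) this
  simpa using this

noncomputable def plen (z : PushoutI φ) : ℕ :=
  ((NormalWord.equiv (d := d)) z).toList.length

lemma equiv_prod (w : NormalWord d) : (NormalWord.equiv (d := d)) w.prod = w :=
  (NormalWord.equiv (d := d)).apply_symm_apply w

lemma plen_prod (w : NormalWord d) : plen d w.prod = w.toList.length := by
  rw [plen, equiv_prod]

lemma word_rcons_len_le {b : Bool} (q : CoprodI.Word.Pair G b) :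
    (CoprodI.Word.rcons q).toList.length ≤ q.tail.toList.length + 1 := by
  rw [CoprodI.Word.rcons]
  split <;> simp [CoprodI.Word.cons]

lemma word_rcons_len_ge {b : Bool} (q : CoprodI.Word.Pair G b) :
    q.tail.toList.length ≤ (CoprodI.Word.rcons q).toList.length := by
  rw [CoprodI.Word.rcons]
  split <;> simp [CoprodI.Word.cons]

lemma word_equivPair_tail_len (b : Bool) (w : CoprodI.Word G) :
    (CoprodI.Word.equivPair b w).tail.toList.length ≤ w.toList.length := by
  have h : CoprodI.Word.rcons (CoprodI.Word.equivPair b w) = w := by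
    rw [← CoprodI.Word.equivPair_symm, Equiv.symm_apply_apply]
  calc (CoprodI.Word.equivPair b w).tail.toList.length
      ≤ (CoprodI.Word.rcons (CoprodI.Word.equivPair b w)).toList.length :=
        word_rcons_len_ge _
    _ = w.toList.length := by rw [h]

lemma pushout_rcons_toList {b : Bool} (p : PushoutI.NormalWord.Pair d b) :
    (PushoutI.NormalWord.rcons b p).toList =
      (CoprodI.Word.rcons (⟨(((d.compl b).equiv p.head).2 : G b), p.tail, p.fstIdx_ne⟩ :
        CoprodI.Word.Pair G b)).toList := by
  rw [PushoutI.NormalWord.rcons]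
  simp only [CoprodI.Word.equivPair_symm]

lemma smul_len_le {b : Bool} (g : G b) (w : NormalWord d) :
    (g • w).toList.length ≤ w.toList.length + 1 := by
  rw [summand_smul_def']
  show (PushoutI.NormalWord.rcons b _).toList.length ≤ _
  rw [pushout_rcons_toList]
  refine le_trans (word_rcons_len_le _) ?_
  have htail : (PushoutI.NormalWord.equivPair b w).tail = 
      (CoprodI.Word.equivPair b w.toWord).tail := by
    show (CoprodI.Word.equivPair b (CoprodI.of (φ b w.head) • w.toWord)).tail = _
    rw [CoprodI.Word.equivPair_smul_same]
  simp only [htail]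
  exact Nat.add_le_add_right (word_equivPair_tail_len b w.toWord) 1

lemma plen_base_mul (k : H) (z : PushoutI φ) :
    plen d (base φ k * z) = plen d z := by
  have : (NormalWord.equiv (d := d)) (base φ k * z) =
      k • ((NormalWord.equiv (d := d)) z) := by
    show (base φ k * z) • (NormalWord.empty : NormalWord d) =
      k • (z • (NormalWord.empty : NormalWord d))
    rw [mul_smul, ← base_smul_eq_smul]
  rw [plen, this, base_smul_def']
  rfl

lemma plen_of_mul_le {b : Bool} (g : G b) (z : PushoutI φ) :
    plen d (PushoutI.of (φ := φ) b g * z) ≤ plen d z + 1 := by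
  have : (NormalWord.equiv (d := d)) (PushoutI.of (φ := φ) b g * z) =
      g • ((NormalWord.equiv (d := d)) z) := by
    show (PushoutI.of (φ := φ) b g * z) • (NormalWord.empty : NormalWord d) =
      g • (z • (NormalWord.empty : NormalWord d))
    rw [mul_smul, ← of_smul_eq_smul]
  rw [plen, this]
  exact smul_len_le d g _

lemma plen_mul_le (x y : PushoutI φ) : plen d (x * y) ≤ plen d x + plen d y := by
  have key : ∀ w : NormalWord d, ∀ y : PushoutI φ,
      plen d (w.prod * y) ≤ w.toList.length + plen d y := by
    intro w
    induction w using PushoutI.NormalWord.consRecOn with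
    | empty => intro y; simp [NormalWord.prod_empty]
    | cons i g w hmw hgn hgr hw1 ih =>
      intro y
      rw [NormalWord.prod_cons, mul_assoc]
      refine le_trans (plen_of_mul_le d g _) ?_
      rw [NormalWord.cons_toList]
      have := ih y
      simp only [List.length_cons]
      omega
    | base k w hw1 ih =>
      intro y
      rw [NormalWord.prod_smul, mul_assoc, plen_base_mul]
      have hl : (base φ k • w).toList = w.toList := by
        rw [base_smul_eq_smul, base_smul_def']
      rw [hl]
      exact ih y
  have hx : ((NormalWord.equiv (d := d)).symm ((NormalWord.equiv (d := d)) x)) = x :=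
    Equiv.symm_apply_apply _ _
  calc plen d (x * y) = plen d (((NormalWord.equiv (d := d)) x).prod * y) := by
        rw [show ((NormalWord.equiv (d := d)) x).prod = x from hx]
    _ ≤ ((NormalWord.equiv (d := d)) x).toList.length + plen d y := key _ y
    _ = plen d x + plen d y := rfl

lemma plen_reduced {w : CoprodI.Word G} (hw : Reduced φ w) :
    plen d (ofCoprodI w.prod) = w.toList.length := by
  obtain ⟨w', hw'prod, hw'map⟩ := hw.exists_normalWord_prod_eq d
  rw [← hw'prod, plen_prod]
  have := congrArg List.length hw'map
  simpa using this

include d in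
lemma index_list_eq {w₁ w₂ : CoprodI.Word G} (h₁ : Reduced φ w₁) (h₂ : Reduced φ w₂)
    (heq : ofCoprodI (φ := φ) w₁.prod = ofCoprodI (φ := φ) w₂.prod) :
    w₁.toList.map Sigma.fst = w₂.toList.map Sigma.fst := by
  obtain ⟨v₁, hv₁, hm₁⟩ := h₁.exists_normalWord_prod_eq d
  obtain ⟨v₂, hv₂, hm₂⟩ := h₂.exists_normalWord_prod_eq d
  have hv : v₁ = v₂ := NormalWord.prod_injective (by rw [hv₁, hv₂, heq])
  rw [← hm₁, ← hm₂, hv]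

lemma not_range_ne_one {b : Bool} {g : G b} (hg : g ∉ (φ b).range) : g ≠ 1 := by
  rintro rfl; exact hg (Subgroup.one_mem _)

lemma shift_not_range {b : Bool} {g : G b} (p q : H) (hg : g ∉ (φ b).range) :
    φ b p * g * φ b q ∉ (φ b).range := by
  rintro ⟨m, hm⟩
  exact hg ⟨p⁻¹ * m * q⁻¹, by
    rw [map_mul, map_mul, map_inv, map_inv]
    rw [show (φ b) m = φ b p * g * φ b q from hm]
    group⟩

/-- A two letter word. -/
def word2 {i j : Bool} (hij : i ≠ j) {x : G i} {y : G j}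
    (hx : x ≠ 1) (hy : y ≠ 1) : CoprodI.Word G where
  toList := [⟨i, x⟩, ⟨j, y⟩]
  ne_one := by
    rintro l hl
    simp only [List.mem_cons, List.mem_singleton, List.not_mem_nil, or_false] at hl
    rcases hl with rfl | rfl
    · exact hx
    · exact hy
  chain_ne := by simp [List.isChain_cons_cons, hij]

lemma word2_prod {i j : Bool} (hij : i ≠ j) {x : G i} {y : G j}
    (hx : x ≠ 1) (hy : y ≠ 1) :
    ofCoprodI (φ := φ) (word2 hij hx hy).prod =
      PushoutI.of (φ := φ) i x * PushoutI.of (φ := φ) j y := by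
  simp [word2, CoprodI.Word.prod, ofCoprodI_of]

lemma word2_reduced {i j : Bool} (hij : i ≠ j) {x : G i} {y : G j}
    (hx : x ∉ (φ i).range) (hy : y ∉ (φ j).range) :
    Reduced φ (word2 hij (not_range_ne_one hx) (not_range_ne_one hy)) := by
  intro l hl
  simp only [word2, List.mem_cons, List.mem_singleton, List.not_mem_nil, or_false] at hl
  rcases hl with rfl | rfl
  · exact hx
  · exact hy

include hφ in
/-- Uniqueness-type lemma for products of two letters from distinct factors. -/
lemma pair_eq {i j : Bool} (hij : i ≠ j) {x x' : G i} {y y' : G j}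
    (heq : PushoutI.of (φ := φ) i x * PushoutI.of (φ := φ) j y =
      PushoutI.of (φ := φ) i x' * PushoutI.of (φ := φ) j y') :
    ∃ m : H, x = x' * φ i m ∧ y = φ j m⁻¹ * y' := by
  have h1 : PushoutI.of (φ := φ) i (x'⁻¹ * x) = PushoutI.of (φ := φ) j (y' * y⁻¹) := by
    rw [map_mul, map_mul, map_inv, map_inv]
    have := congrArg (fun z => (PushoutI.of (φ := φ) i x')⁻¹ * z *
      (PushoutI.of (φ := φ) j y)⁻¹) heq
    simpa [mul_assoc] using this
  have hmem : PushoutI.of (φ := φ) i (x'⁻¹ * x) ∈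
      (PushoutI.of (φ := φ) i).range ⊓ (PushoutI.of (φ := φ) j).range :=
    ⟨⟨x'⁻¹ * x, rfl⟩, ⟨y' * y⁻¹, h1.symm⟩⟩
  rw [inf_of_range_eq_base_range hφ hij] at hmem
  obtain ⟨m, hm⟩ := hmem
  refine ⟨m, ?_, ?_⟩
  · have : PushoutI.of (φ := φ) i (φ i m) = PushoutI.of (φ := φ) i (x'⁻¹ * x) := by
      rw [of_apply_eq_base, hm]
    have h2 := of_injective hφ i this
    rw [h2, mul_inv_cancel_left]
  · have : PushoutI.of (φ := φ) j (φ j m) = PushoutI.of (φ := φ) j (y' * y⁻¹) := by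
      rw [of_apply_eq_base, hm, h1]
    have h2 := of_injective hφ j this
    rw [map_inv, h2]
    group

lemma normalWord_reduced (w : NormalWord d) : Reduced φ w.toWord := by
  intro l hl hlr
  exact w.toWord.ne_one l hl (mem_set_range_eq_one d (w.normalized l.1 l.2 hl) hlr)

include d in
/-- The key length-contradiction lemma. -/
lemma key_len {i j : Bool} (hij : i ≠ j) {z₁ z₃ : G i} {z₂ : G j}
    (h₁ : z₁ ∉ (φ i).range) (h₂ : z₂ ∉ (φ j).range) (h₃ : z₃ ∉ (φ i).range)
    (w : NormalWord d) (hw : w.fstIdx ≠ some i) (hwh : w.head = 1)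
    (y : PushoutI φ) (hy : plen d y ≤ 2) :
    PushoutI.of (φ := φ) i z₁ * (PushoutI.of (φ := φ) j z₂ *
      (PushoutI.of (φ := φ) i z₃ * w.prod)) ≠ w.prod * y := by
  intro heq
  -- build the long reduced word
  have hchain : (⟨i, z₁⟩ :: ⟨j, z₂⟩ :: ⟨i, z₃⟩ :: w.toList :
      List (Σ b, G b)).Chain' (fun l l' => l.1 ≠ l'.1) := by
    refine List.IsChain.cons_cons hij (List.IsChain.cons_cons (Ne.symm hij) ?_)
    refine List.IsChain.cons w.toWord.chain_ne ?_
    intro l hl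
    exact (CoprodI.Word.fstIdx_ne_iff.mp hw l hl)
  set W : CoprodI.Word G := ⟨⟨i, z₁⟩ :: ⟨j, z₂⟩ :: ⟨i, z₃⟩ :: w.toList, by
      rintro l hl
      simp only [List.mem_cons] at hl
      rcases hl with rfl | rfl | rfl | h
      · exact not_range_ne_one h₁
      · exact not_range_ne_one h₂
      · exact not_range_ne_one h₃
      · exact w.toWord.ne_one l h, hchain⟩ with hW
  have hWred : Reduced φ W := by
    intro l hl
    simp only [hW, List.mem_cons] at hl
    rcases hl with rfl | rfl | rfl | h
    · exact h₁
    · exact h₂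
    · exact h₃
    · exact normalWord_reduced d w l h
  have hwprod : w.prod = ofCoprodI (φ := φ) w.toWord.prod := by
    rw [NormalWord.prod, hwh, map_one, one_mul]
  have hWprod : ofCoprodI (φ := φ) W.prod =
      PushoutI.of (φ := φ) i z₁ * (PushoutI.of (φ := φ) j z₂ *
        (PushoutI.of (φ := φ) i z₃ * w.prod)) := by
    rw [hwprod]
    simp [hW, CoprodI.Word.prod, ofCoprodI_of, mul_assoc]
  have hlen1 : plen d (ofCoprodI (φ := φ) W.prod) = 3 + w.toList.length := by
    rw [plen_reduced d hWred, hW]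
    simp only [List.length_cons]
    omega
  have hlen2 : plen d (w.prod * y) ≤ w.toList.length + 2 := by
    refine le_trans (plen_mul_le d _ _) ?_
    rw [plen_prod]
    omega
  rw [hWprod, heq] at hlen1
  omega

lemma base_mul_of {b : Bool} (m : H) (x : G b) :
    base φ m * PushoutI.of (φ := φ) b x = PushoutI.of (φ := φ) b (φ b m * x) := by
  rw [map_mul, of_apply_eq_base]

lemma of_mul_base {b : Bool} (x : G b) (m : H) :
    PushoutI.of (φ := φ) b x * base φ m = PushoutI.of (φ := φ) b (x * φ b m) := by
  rw [map_mul, of_apply_eq_base]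

lemma mul_not_range_left {b : Bool} {g : G b} (p : H) (hg : g ∉ (φ b).range) :
    φ b p * g ∉ (φ b).range := by
  rintro ⟨m, hm⟩
  exact hg ⟨p⁻¹ * m, by rw [map_mul, map_inv, hm]; group⟩

lemma inv_not_range {b : Bool} {g : G b} (hg : g ∉ (φ b).range) :
    g⁻¹ ∉ (φ b).range := by
  rintro ⟨m, hm⟩
  exact hg ⟨m⁻¹, by rw [map_inv, hm, inv_inv]⟩

lemma cancel_helper {b : Bool} (g : G b) (u v : PushoutI φ) :
    PushoutI.of (φ := φ) b g⁻¹ * ((PushoutI.of (φ := φ) b g * u) * v) = u * v := by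
  simp only [← mul_assoc, ← map_mul, inv_mul_cancel, map_one, one_mul]

lemma cancel_helper_base (k : H) (u v : PushoutI φ) :
    base φ k⁻¹ * ((base φ k * u) * v) = u * v := by
  simp only [← mul_assoc, ← map_mul, inv_mul_cancel, map_one, one_mul]

lemma of_shift_left {b : Bool} (k α β : H) (x : G b) :
    PushoutI.of (φ := φ) b (φ b (k * α) * x * φ b β) =
      base φ k * PushoutI.of (φ := φ) b (φ b α * x * φ b β) := by
  rw [base_mul_of]; congr 1; simp [map_mul, mul_assoc]

lemma of_shift_right {b : Bool} (α β k : H) (x : G b) :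
    PushoutI.of (φ := φ) b (φ b α * x * φ b (β * k)) =
      PushoutI.of (φ := φ) b (φ b α * x * φ b β) * base φ k := by
  rw [of_mul_base]; congr 1; simp [map_mul, mul_assoc]

lemma cancel_helper' {b : Bool} (g : G b) (u : PushoutI φ) :
    PushoutI.of (φ := φ) b g⁻¹ * (PushoutI.of (φ := φ) b g * u) = u := by
  rw [← mul_assoc, ← map_mul, inv_mul_cancel, map_one, one_mul]

lemma cancel_helper_base' (k : H) (u : PushoutI φ) :
    base φ k⁻¹ * (base φ k * u) = u := by
  rw [← mul_assoc, ← map_mul, inv_mul_cancel, map_one, one_mul]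

end Helpers
section Main

variable {H : Type} [Group H] {G : Bool → Type} [∀ b, Group (G b)]
  {φ : ∀ b, H →* G b}

lemma main_ind (hφ : ∀ b, Function.Injective (φ b)) (d : Transversal φ)
    (g₁ : G true) (g₂ : G false) (h : H)
    (hg₁ : g₁ ∉ (φ true).range) (hg₂ : g₂ ∉ (φ false).range)
    (hint : ∀ x ∈ (φ true).range, g₁⁻¹ * x * g₁ ∈ (φ true).range → g₁⁻¹ * x * g₁ = 1)
    (hcomm : g₂ * φ false h ≠ φ false h * g₂) (w : NormalWord d) :
    ∀ s t : H, g₂ * φ false t = φ false s * g₂ →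
    (∀ α β γ δ : H, β * γ = s⁻¹ → δ * α = t * h →
      PushoutI.of (φ := φ) true (φ true α * g₁ * φ true β) *
        (PushoutI.of (φ := φ) false (φ false γ * g₂ * φ false δ) * w.prod) ≠
        w.prod * (base φ h * PushoutI.of (φ := φ) false g₂ * PushoutI.of (φ := φ) true g₁)) ∧
    (∀ α β γ δ : H, β * γ = s⁻¹ → δ * α = t * h →
      PushoutI.of (φ := φ) false (φ false γ * g₂ * φ false δ) *
        (PushoutI.of (φ := φ) true (φ true α * g₁ * φ true β) * w.prod) ≠
        w.prod * (base φ h * PushoutI.of (φ := φ) false g₂ * PushoutI.of (φ := φ) true g₁)) := by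
  set B : PushoutI φ :=
    base φ h * PushoutI.of (φ := φ) false g₂ * PushoutI.of (φ := φ) true g₁ with hB
  have htf : (true : Bool) ≠ false := by decide
  have hft : (false : Bool) ≠ true := by decide
  have hBlen : plen d B ≤ 2 := by
    have h1 : φ false h * g₂ ∉ (φ false).range := mul_not_range_left h hg₂
    have hBform : B = PushoutI.of (φ := φ) false (φ false h * g₂) *
        PushoutI.of (φ := φ) true g₁ := by
      rw [hB, base_mul_of]
    rw [hBform, ← word2_prod hft (not_range_ne_one h1) (not_range_ne_one hg₁),
      plen_reduced d (word2_reduced hft h1 hg₁)]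
    simp [word2]
  induction w using PushoutI.NormalWord.consRecOn with
  | empty =>
    intro s t ht
    constructor
    · intro α β γ δ hβγ hδα heq
      rw [NormalWord.prod_empty, mul_one, one_mul] at heq
      have hXr : φ true α * g₁ * φ true β ∉ (φ true).range := shift_not_range α β hg₁
      have hYr : φ false γ * g₂ * φ false δ ∉ (φ false).range := shift_not_range γ δ hg₂
      have hZr : φ false h * g₂ ∉ (φ false).range := mul_not_range_left h hg₂
      have heq2 : ofCoprodI (φ := φ)
          (word2 htf (not_range_ne_one hXr) (not_range_ne_one hYr)).prod =
          ofCoprodI (φ := φ)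
          (word2 hft (not_range_ne_one hZr) (not_range_ne_one hg₁)).prod := by
        rw [word2_prod, word2_prod, heq, hB, base_mul_of]
      have := index_list_eq d (word2_reduced htf hXr hYr)
        (word2_reduced hft hZr hg₁) heq2
      simp [word2] at this
    · intro α β γ δ hβγ hδα heq
      rw [NormalWord.prod_empty, mul_one, one_mul] at heq
      rw [hB, base_mul_of] at heq
      obtain ⟨m, hm1, hm2⟩ := pair_eq hφ hft heq
      -- hm1 : φ false γ * g₂ * φ false δ = (φ false h * g₂) * φ false m
      -- hm2 : φ true α * g₁ * φ true β = φ true m⁻¹ * g₁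
      have key1 : g₁⁻¹ * φ true (m * α) * g₁ = φ true β⁻¹ := by
        have h6 : φ true (m * α) * g₁ * φ true β = g₁ := by
          rw [map_mul]
          calc φ true m * φ true α * g₁ * φ true β
              = φ true m * (φ true α * g₁ * φ true β) := by simp [mul_assoc]
            _ = φ true m * (φ true m⁻¹ * g₁) := by rw [hm2]
            _ = g₁ := by rw [← mul_assoc, ← map_mul, mul_inv_cancel, map_one, one_mul]
        calc g₁⁻¹ * φ true (m * α) * g₁
            = g₁⁻¹ * (φ true (m * α) * g₁ * φ true β) * φ true β⁻¹ := by
              rw [map_inv]; group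
          _ = φ true β⁻¹ := by rw [h6]; rw [map_inv]; group
      have key2 : g₁⁻¹ * φ true (m * α) * g₁ = 1 :=
        hint _ ⟨m * α, rfl⟩ (key1 ▸ ⟨β⁻¹, rfl⟩)
      have hmα : m = α⁻¹ := by
        have h7 : φ true (m * α) = 1 := by
          calc φ true (m * α) = g₁ * (g₁⁻¹ * φ true (m * α) * g₁) * g₁⁻¹ := by group
            _ = 1 := by rw [key2]; group
        have : m * α = 1 := hφ true (by rw [h7, map_one])
        exact eq_inv_of_mul_eq_one_left this
      have hβ : β = 1 := by
        have h8 : φ true β⁻¹ = 1 := key1.symm.trans key2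
        have : β⁻¹ = 1 := hφ true (by rw [h8, map_one])
        simpa using this
      have hγ : γ = s⁻¹ := by rw [hβ, one_mul] at hβγ; exact hβγ
      -- final contradiction with hcomm
      have e1 : φ false s⁻¹ * g₂ = g₂ * φ false t⁻¹ := by
        calc φ false s⁻¹ * g₂
            = φ false s⁻¹ * (g₂ * φ false t) * φ false t⁻¹ := by
              rw [map_inv, map_inv]; group
          _ = φ false s⁻¹ * (φ false s * g₂) * φ false t⁻¹ := by rw [ht]
          _ = g₂ * φ false t⁻¹ := by rw [map_inv, map_inv]; group
      have h5 : φ false s⁻¹ * g₂ * φ false δ = φ false h * g₂ * φ false α⁻¹ := by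
        rw [← hγ, ← hmα]; exact hm1
      have hh2 : h = t⁻¹ * (δ * α) := by rw [hδα, inv_mul_cancel_left]
      have e2 : g₂ * φ false h = φ false h * g₂ := by
        conv_lhs => rw [hh2]
        calc g₂ * φ false (t⁻¹ * (δ * α))
            = (g₂ * φ false t⁻¹) * (φ false δ * φ false α) := by
              simp [map_mul, mul_assoc]
          _ = (φ false s⁻¹ * g₂) * (φ false δ * φ false α) := by rw [← e1]
          _ = (φ false s⁻¹ * g₂ * φ false δ) * φ false α := by simp [mul_assoc]
          _ = (φ false h * g₂ * φ false α⁻¹) * φ false α := by rw [h5]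
          _ = φ false h * g₂ := by rw [map_inv]; group
      exact hcomm e2
  | cons i g w hmw hgn hgr hw1 ih =>
    intro s t ht
    have ihst := ih s t ht
    constructor
    · intro α β γ δ hβγ hδα heq
      rw [NormalWord.prod_cons] at heq
      cases i with
      | false =>
        by_cases hc : (φ false γ * g₂ * φ false δ) * g ∈ (φ false).range
        · obtain ⟨m, hm⟩ := hc
          apply ihst.2 α (β * m) (m⁻¹ * γ) δ
            (by rw [show β * m * (m⁻¹ * γ) = β * γ by group, hβγ]) hδα
          have hginv : g⁻¹ = φ false (m⁻¹ * γ) * g₂ * φ false δ := by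
            have hg' : g = (φ false γ * g₂ * φ false δ)⁻¹ * φ false m := by
              rw [hm]; group
            rw [hg', map_mul, map_inv]; group
          have e1 : PushoutI.of (φ := φ) false (φ false (m⁻¹ * γ) * g₂ * φ false δ) =
              PushoutI.of (φ := φ) false g⁻¹ := by rw [← hginv]
          have e2 : PushoutI.of (φ := φ) true (φ true α * g₁ * φ true (β * m)) =
              PushoutI.of (φ := φ) true (φ true α * g₁ * φ true β) *
              (PushoutI.of (φ := φ) false (φ false γ * g₂ * φ false δ) *
                PushoutI.of (φ := φ) false g) := by
            rw [of_shift_right α β m g₁, ← of_apply_eq_base φ false m, hm,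
              map_mul (PushoutI.of (φ := φ) false) (φ false γ * g₂ * φ false δ) g]
          rw [e1, e2]
          simp only [mul_assoc] at heq ⊢
          rw [heq, cancel_helper']
        · apply key_len d hft (inv_not_range hgr) (shift_not_range α β hg₁) hc w hmw hw1
            B hBlen
          rw [map_mul (PushoutI.of (φ := φ) false) (φ false γ * g₂ * φ false δ) g]
          simp only [mul_assoc] at heq ⊢
          rw [heq, cancel_helper']
      | true =>
        by_cases hc : g⁻¹ * (φ true α * g₁ * φ true β) ∈ (φ true).range
        · obtain ⟨m, hm⟩ := hc
          apply ihst.2 α (β * m⁻¹) (m * γ) δ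
            (by rw [show β * m⁻¹ * (m * γ) = β * γ by group, hβγ]) hδα
          have hgeq : g = φ true α * g₁ * φ true (β * m⁻¹) := by
            have hg' : g = (φ true α * g₁ * φ true β) * (φ true m)⁻¹ := by
              rw [hm]; group
            rw [hg', map_mul, map_inv]; group
          have e1 : PushoutI.of (φ := φ) false (φ false (m * γ) * g₂ * φ false δ) =
              (PushoutI.of (φ := φ) true g⁻¹ *
                PushoutI.of (φ := φ) true (φ true α * g₁ * φ true β)) *
              PushoutI.of (φ := φ) false (φ false γ * g₂ * φ false δ) := by
            rw [of_shift_left m γ δ g₂, ← of_apply_eq_base φ true m, hm,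
              map_mul (PushoutI.of (φ := φ) true) g⁻¹ (φ true α * g₁ * φ true β)]
          have e2 : PushoutI.of (φ := φ) true (φ true α * g₁ * φ true (β * m⁻¹)) =
              PushoutI.of (φ := φ) true g := by rw [← hgeq]
          rw [e1, e2]
          simp only [mul_assoc] at heq ⊢
          rw [heq, cancel_helper']
        · apply key_len d htf hc (shift_not_range γ δ hg₂) hgr w hmw hw1 B hBlen
          rw [map_mul (PushoutI.of (φ := φ) true) g⁻¹ (φ true α * g₁ * φ true β)]
          simp only [mul_assoc] at heq ⊢
          rw [heq, cancel_helper']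
    · intro α β γ δ hβγ hδα heq
      rw [NormalWord.prod_cons] at heq
      cases i with
      | true =>
        by_cases hc : (φ true α * g₁ * φ true β) * g ∈ (φ true).range
        · obtain ⟨m, hm⟩ := hc
          apply ihst.1 (m⁻¹ * α) β γ (δ * m) hβγ
            (by rw [show δ * m * (m⁻¹ * α) = δ * α by group, hδα])
          have hginv : g⁻¹ = φ true (m⁻¹ * α) * g₁ * φ true β := by
            have hg' : g = (φ true α * g₁ * φ true β)⁻¹ * φ true m := by
              rw [hm]; group
            rw [hg', map_mul, map_inv]; group
          have e1 : PushoutI.of (φ := φ) true (φ true (m⁻¹ * α) * g₁ * φ true β) =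
              PushoutI.of (φ := φ) true g⁻¹ := by rw [← hginv]
          have e2 : PushoutI.of (φ := φ) false (φ false γ * g₂ * φ false (δ * m)) =
              PushoutI.of (φ := φ) false (φ false γ * g₂ * φ false δ) *
              (PushoutI.of (φ := φ) true (φ true α * g₁ * φ true β) *
                PushoutI.of (φ := φ) true g) := by
            rw [of_shift_right γ δ m g₂, ← of_apply_eq_base φ true m, hm,
              map_mul (PushoutI.of (φ := φ) true) (φ true α * g₁ * φ true β) g]
          rw [e1, e2]
          simp only [mul_assoc] at heq ⊢
          rw [heq, cancel_helper']
        · apply key_len d htf (inv_not_range hgr) (shift_not_range γ δ hg₂) hc w hmw hw1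
            B hBlen
          rw [map_mul (PushoutI.of (φ := φ) true) (φ true α * g₁ * φ true β) g]
          simp only [mul_assoc] at heq ⊢
          rw [heq, cancel_helper']
      | false =>
        by_cases hc : g⁻¹ * (φ false γ * g₂ * φ false δ) ∈ (φ false).range
        · obtain ⟨m, hm⟩ := hc
          apply ihst.1 (m * α) β γ (δ * m⁻¹) hβγ
            (by rw [show δ * m⁻¹ * (m * α) = δ * α by group, hδα])
          have hgeq : g = φ false γ * g₂ * φ false (δ * m⁻¹) := by
            have hg' : g = (φ false γ * g₂ * φ false δ) * (φ false m)⁻¹ := by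
              rw [hm]; group
            rw [hg', map_mul, map_inv]; group
          have e1 : PushoutI.of (φ := φ) true (φ true (m * α) * g₁ * φ true β) =
              (PushoutI.of (φ := φ) false g⁻¹ *
                PushoutI.of (φ := φ) false (φ false γ * g₂ * φ false δ)) *
              PushoutI.of (φ := φ) true (φ true α * g₁ * φ true β) := by
            rw [of_shift_left m α β g₁, ← of_apply_eq_base φ false m, hm,
              map_mul (PushoutI.of (φ := φ) false) g⁻¹ (φ false γ * g₂ * φ false δ)]
          have e2 : PushoutI.of (φ := φ) false (φ false γ * g₂ * φ false (δ * m⁻¹)) =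
              PushoutI.of (φ := φ) false g := by rw [← hgeq]
          rw [e1, e2]
          simp only [mul_assoc] at heq ⊢
          rw [heq, cancel_helper']
        · apply key_len d hft hc (shift_not_range α β hg₁) hgr w hmw hw1 B hBlen
          rw [map_mul (PushoutI.of (φ := φ) false) g⁻¹ (φ false γ * g₂ * φ false δ)]
          simp only [mul_assoc] at heq ⊢
          rw [heq, cancel_helper']
  | base k w hw1 ih =>
    intro s t ht
    have ihst := ih s t ht
    constructor
    · intro α β γ δ hβγ hδα heq
      rw [NormalWord.prod_smul] at heq
      apply ihst.1 (k⁻¹ * α) β γ (δ * k) hβγ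
        (by rw [show δ * k * (k⁻¹ * α) = δ * α by group, hδα])
      rw [of_shift_left k⁻¹ α β g₁, of_shift_right γ δ k g₂]
      simp only [mul_assoc] at heq ⊢
      rw [heq, cancel_helper_base']
    · intro α β γ δ hβγ hδα heq
      rw [NormalWord.prod_smul] at heq
      apply ihst.2 α (β * k) (k⁻¹ * γ) δ
        (by rw [show β * k * (k⁻¹ * γ) = β * γ by group, hβγ]) hδα
      rw [of_shift_left k⁻¹ γ δ g₂, of_shift_right α β k g₁]
      simp only [mul_assoc] at heq ⊢
      rw [heq, cancel_helper_base']

end Main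

/-- Let `G₁ = G true`, `G₂ = G false` be groups with a common subgroup `H`
embedded via monomorphisms `φ b : H →* G b`, and let `PushoutI φ` be the amalgamated free
product `G₁ *_H G₂`.  If `g₁ ∈ G₁ \ H`, `g₂ ∈ G₂ \ H` and `1 ≠ h ∈ H` satisfy
`g₁⁻¹ H g₁ ∩ H = 1` (in `G₁`) and `g₂ h ≠ h g₂` (in `G₂`), then `h g₁ g₂` and `h g₂ g₁`
are not conjugate in the amalgamated free product. -/
theorem stmt_0 {H : Type} [Group H] (G : Bool → Type) [∀ b, Group (G b)]
    (φ : ∀ b, H →* G b) (hφ : ∀ b, Function.Injective (φ b))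
    (g₁ : G true) (g₂ : G false) (h : H) (hh : h ≠ 1)
    (hg₁ : g₁ ∉ (φ true).range) (hg₂ : g₂ ∉ (φ false).range)
    (hint : ∀ x ∈ (φ true).range, g₁⁻¹ * x * g₁ ∈ (φ true).range → g₁⁻¹ * x * g₁ = 1)
    (hcomm : g₂ * φ false h ≠ φ false h * g₂) :
    ¬ IsConj
      (PushoutI.base φ h * PushoutI.of (φ := φ) true g₁ * PushoutI.of (φ := φ) false g₂)
      (PushoutI.base φ h * PushoutI.of (φ := φ) false g₂ * PushoutI.of (φ := φ) true g₁) := by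
  intro hconj
  obtain ⟨d⟩ := Monoid.PushoutI.NormalWord.transversal_nonempty φ hφ
  rw [isConj_iff] at hconj
  obtain ⟨c, hc⟩ := hconj
  have heq : (PushoutI.base φ h * PushoutI.of (φ := φ) true g₁ *
      PushoutI.of (φ := φ) false g₂) * c⁻¹ =
      c⁻¹ * (PushoutI.base φ h * PushoutI.of (φ := φ) false g₂ *
        PushoutI.of (φ := φ) true g₁) := by
    rw [← hc]; group
  have hw' : (NormalWord.equiv (d := d)).symm ((NormalWord.equiv (d := d)) c⁻¹) = c⁻¹ :=
    Equiv.symm_apply_apply _ _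
  have hw : ((NormalWord.equiv (d := d)) c⁻¹).prod = c⁻¹ := hw'
  apply (main_ind hφ d g₁ g₂ h hg₁ hg₂ hint hcomm ((NormalWord.equiv (d := d)) c⁻¹)
    1 1 (by simp)).1 h 1 1 1 (by simp) (by simp)
  simp only [map_one, one_mul, mul_one]
  rw [hw,
    show PushoutI.of (φ := φ) true (φ true h * g₁) =
      PushoutI.base φ h * PushoutI.of (φ := φ) true g₁ from (base_mul_of h g₁).symm]
  simp only [mul_assoc] at heq ⊢
  exact heq
end

section
/- Let G = G₁ *_H G₂ be an amalgamated free product with injective structure maps φᵢ : H → Gᵢ. If c₁, c₂, …, cₙ (n ≥ 1) is a reduced sequence in G (each cᵢ lies in one of the factors G₁ or G₂, consecutive cᵢ, cᵢ₊₁ lie in different factors, no cᵢ with n > 1 lies in the image of H, and if n = 1 then c₁ ≠ 1), then the product c₁ c₂ ⋯ cₙ ≠ 1 in G. -/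
/-!
Read the sequence as a word of the free product `CoprodI G`. Consecutive letters come from
different factors and, for `n > 1`, no letter lies in the image of `H` (in particular none is `1`),
so it is a reduced word in the sense of the normal form theorem for amalgamated products, and
its image in `PushoutI φ` lies in the base group only if the word is empty. A one-letter word is
handled by injectivity of the factor inclusions.
-/

open Monoid

namespace Monoid.CoprodI.Word

variable {ι : Type*} {M : ι → Type*} [∀ i, Monoid (M i)]

def ofFn {n : ℕ} (idx : Fin n → ι) (c : ∀ k, M (idx k)) (hne : ∀ k, c k ≠ 1)
    (halt : ∀ (k : ℕ) (hk : k + 1 < n),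
      idx ⟨k, Nat.lt_of_succ_lt hk⟩ ≠ idx ⟨k + 1, hk⟩) :
    Word M where
  toList := List.ofFn fun k => ⟨idx k, c k⟩
  ne_one := by
    simp only [List.mem_ofFn, forall_exists_index]
    rintro _ k rfl
    exact hne k
  chain_ne := by
    rw [List.isChain_iff_getElem]
    intro k hk
    simp only [List.length_ofFn] at hk
    simpa only [List.getElem_ofFn] using halt k hk

variable {n : ℕ} {idx : Fin n → ι} {c : ∀ k, M (idx k)} {hne : ∀ k, c k ≠ 1}
  {halt : ∀ (k : ℕ) (hk : k + 1 < n), idx ⟨k, Nat.lt_of_succ_lt hk⟩ ≠ idx ⟨k + 1, hk⟩}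

@[simp]
theorem length_ofFn : (ofFn idx c hne halt).toList.length = n :=
  List.length_ofFn

theorem prod_ofFn : (ofFn idx c hne halt).prod = (List.ofFn fun k => of (c k)).prod := by
  simp only [prod, ofFn, List.map_ofFn, Function.comp_def]

end Monoid.CoprodI.Word

namespace Monoid.PushoutI

variable {ι : Type*} {G : ι → Type*} {H : Type*} [∀ i, Group (G i)] [Group H]
  {φ : ∀ i, H →* G i}

theorem Reduced.ofCoprodI_prod_ne_one (hφ : ∀ i, Function.Injective (φ i))
    {w : CoprodI.Word G} (hw : Reduced φ w) (hne : w ≠ .empty) :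
    ofCoprodI (φ := φ) w.prod ≠ 1 :=
  fun h => hne <| hw.eq_empty_of_mem_range hφ <| h ▸ (base φ).range.one_mem

theorem prod_ofFn_ne_one (hφ : ∀ i, Function.Injective (φ i)) {n : ℕ} (hn : 1 < n)
    (idx : Fin n → ι) (c : ∀ k, G (idx k))
    (halt : ∀ (k : ℕ) (hk : k + 1 < n),
      idx ⟨k, Nat.lt_of_succ_lt hk⟩ ≠ idx ⟨k + 1, hk⟩)
    (hred : ∀ k, c k ∉ (φ (idx k)).range) :
    (List.ofFn fun k => of (φ := φ) (idx k) (c k)).prod ≠ 1 := by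
  have hne : ∀ k, c k ≠ 1 := fun k h => hred k (h ▸ one_mem _)
  set w := CoprodI.Word.ofFn idx c hne halt
  have hw : Reduced φ w := by
    simp only [Reduced, w, CoprodI.Word.ofFn, List.mem_ofFn, forall_exists_index]
    rintro _ k rfl
    exact hred k
  have hw_ne : w ≠ .empty := fun h => by
    have hlen : w.toList.length = n := CoprodI.Word.length_ofFn
    rw [h, CoprodI.Word.empty, List.length_nil] at hlen
    omega
  have hprod : ofCoprodI (φ := φ) w.prod =
      (List.ofFn fun k => of (φ := φ) (idx k) (c k)).prod := by
    rw [CoprodI.Word.prod_ofFn, map_list_prod, List.map_ofFn]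
    rfl
  exact hprod ▸ Reduced.ofCoprodI_prod_ne_one hφ hw hw_ne

end Monoid.PushoutI

/-- In the amalgamated free product `G₁ *_H G₂` (here `PushoutI φ` over the
two-element index type `Bool`, with injective structure maps `φ b : H →* G b`), the product of
a reduced sequence `c₁, …, cₙ` (`n ≥ 1`, each `cₖ` in a factor, consecutive terms in different
factors, no term in the image of `H` when `n > 1`, and `c₁ ≠ 1` when `n = 1`) is not `1`. -/
theorem stmt_1 {H : Type} [Group H] (G : Bool → Type) [∀ b, Group (G b)]
    (φ : ∀ b, H →* G b) (hφ : ∀ b, Function.Injective (φ b))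
    (n : ℕ) (hn : 1 ≤ n) (idx : Fin n → Bool) (c : ∀ k : Fin n, G (idx k))
    (halt : ∀ (k : ℕ) (hk : k + 1 < n),
      idx ⟨k, Nat.lt_of_succ_lt hk⟩ ≠ idx ⟨k + 1, hk⟩)
    (hred : 1 < n → ∀ k : Fin n, c k ∉ (φ (idx k)).range)
    (hone : n = 1 → ∀ k : Fin n, c k ≠ 1) :
    (List.ofFn fun k : Fin n => PushoutI.of (φ := φ) (idx k) (c k)).prod ≠ 1 := by
  rcases hn.eq_or_lt with rfl | hn
  · rw [List.ofFn_succ, List.ofFn_zero, List.prod_singleton]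
    exact fun h => hone rfl 0 <| PushoutI.of_injective hφ (idx 0) <| h.trans (map_one _).symm
  · exact PushoutI.prod_ofFn_ne_one hφ hn idx c halt (hred hn)
end

section
/- In the free product A * B of two groups, if a ∈ A and b ∈ B are nontrivial and a ≠ a⁻¹ and b ≠ b⁻¹, then a b a⁻¹ b⁻¹ and a b⁻¹ a⁻¹ b are not conjugate in A * B. -/
open Monoid Coprod

namespace Stmt2

open Monoid.CoprodI Monoid.CoprodI.Word

set_option linter.unusedSectionVars false
set_option linter.unreachableTactic false
set_option linter.unusedTactic false

variable {M : Bool → Type} [∀ i, Group (M i)] [∀ i, DecidableEq (M i)]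

/-- the reduced word (as a list of letters) of an element of the free product -/
def wl (g : CoprodI M) : List (Σ i, M i) := (Word.equiv g).toList

lemma wl_one : wl (1 : CoprodI M) = [] := by
  have : Word.equiv (1 : CoprodI M) = Word.empty := by
    show (1 : CoprodI M) • (Word.empty : Word M) = _; exact one_smul _ _
  simp [wl, this]

lemma wl_inj {g h : CoprodI M} (hw : wl g = wl h) : g = h :=
  Word.equiv.injective (Word.ext hw)

lemma wl_prod (w : Word M) : wl (Word.prod w) = w.toList := by
  have : Word.prod w = Word.equiv.symm w := rfl
  rw [wl, this, Equiv.apply_symm_apply]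

lemma wl_cons {i} (m : M i) (g : CoprodI M) (hm : m ≠ 1)
    (hg : Word.fstIdx (Word.equiv g) ≠ some i) :
    wl (of m * g) = ⟨i, m⟩ :: wl g := by
  have h1 : Word.equiv (of m * g) = of m • Word.equiv g := by
    show (of m * g) • (Word.empty : Word M) = _; exact mul_smul (of m) g Word.empty
  rw [wl, h1, of_smul_def, equivPair_eq_of_fstIdx_ne hg]
  simp only [rcons, mul_one]
  rw [dif_neg hm]
  rfl

lemma exists_split (g : CoprodI M) (x : Σ i, M i) (rest : List (Σ i, M i))
    (h : wl g = x :: rest) :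
    ∃ g', g = of x.2 * g' ∧ wl g' = rest ∧ Word.fstIdx (Word.equiv g') ≠ some x.1 := by
  have hne : ∀ l ∈ rest, Sigma.snd l ≠ 1 := by
    have := (Word.equiv g).ne_one
    rw [show (Word.equiv g).toList = x :: rest from h] at this
    exact fun l hl => this l (List.mem_cons_of_mem _ hl)
  have hch : List.Chain' (fun l l' : (Σ i, M i) => l.1 ≠ l'.1) (x :: rest) := by
    have := (Word.equiv g).chain_ne
    rwa [show (Word.equiv g).toList = x :: rest from h] at this
  set w' : Word M := ⟨rest, hne, hch.tail⟩ with hw'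
  refine ⟨Word.prod w', ?_, ?_, ?_⟩
  · have hg : g = Word.prod (Word.equiv g) := (Word.equiv.symm_apply_apply g).symm
    rw [hg]
    show Word.prod (Word.equiv g) = of x.2 * Word.prod w'
    rw [Word.prod, Word.prod, show (Word.equiv g).toList = x :: rest from h]
    simp [hw']
  · exact wl_prod w'
  · have : Word.equiv (Word.prod w') = w' := by
      have : Word.prod w' = Word.equiv.symm w' := rfl
      rw [this, Equiv.apply_symm_apply]
    rw [this]
    rcases rest with _ | ⟨y, rest'⟩
    · simp [Word.fstIdx, hw']
    · have hxy : x.1 ≠ y.1 := (List.isChain_cons_cons.mp hch).1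
      simp only [Word.fstIdx, hw']
      simp only [List.head?_cons, Option.map_some]
      intro hc
      exact hxy (by injection hc with h'; exact h'.symm)


lemma wl_ne_one (g : CoprodI M) : ∀ l ∈ wl g, Sigma.snd l ≠ 1 := (Word.equiv g).ne_one

lemma wl_chain (g : CoprodI M) :
    List.Chain' (fun l l' : (Σ i, M i) => l.1 ≠ l'.1) (wl g) := (Word.equiv g).chain_ne

lemma fstIdx_eq_wl (g : CoprodI M) :
    Word.fstIdx (Word.equiv g) = ((wl g).head?).map Sigma.fst := rfl

lemma wl_cons' {i} (m : M i) (g : CoprodI M) (hm : m ≠ 1)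
    (hg : ∀ z ∈ (wl g).head?, Sigma.fst z ≠ i) :
    wl (of m * g) = ⟨i, m⟩ :: wl g := by
  apply wl_cons m g hm
  rw [fstIdx_eq_wl]
  rcases hh : (wl g).head? with _ | z
  · simp
  · simp only [Option.map_some]
    intro hc
    exact hg z hh (Option.some.inj hc)

lemma exists_split' (g : CoprodI M) (x : Σ i, M i) (rest : List (Σ i, M i))
    (h : wl g = x :: rest) :
    ∃ g', g = of x.2 * g' ∧ wl g' = rest ∧ x.2 ≠ 1 ∧
      (∀ z ∈ rest.head?, Sigma.fst z ≠ x.1) := by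
  obtain ⟨g', h1, h2, h3⟩ := exists_split g x rest h
  refine ⟨g', h1, h2, ?_, ?_⟩
  · exact wl_ne_one g x (h ▸ (List.mem_cons_self (a := x) (l := rest)))
  · have := wl_chain g
    rw [h] at this
    rcases rest with _ | ⟨y, rest'⟩
    · simp
    · intro z hz
      simp only [List.head?_cons, Option.mem_def, Option.some.injEq] at hz
      subst hz
      exact ((List.isChain_cons_cons.mp this).1).symm

/-- appending a letter at the end, no-cancellation case -/
lemma wl_concat : ∀ (l : List (Σ i, M i)) (g : CoprodI M), wl g = l →
    ∀ {i : Bool} (m : M i), m ≠ 1 → (∀ z ∈ l.getLast?, Sigma.fst z ≠ i) →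
    wl (g * of m) = l ++ [⟨i, m⟩] := by
  intro l
  induction l with
  | nil =>
    intro g hg i m hm _
    have : g = 1 := wl_inj (hg.trans wl_one.symm)
    subst this
    rw [one_mul, List.nil_append]
    have := wl_cons' m 1 hm (by rw [wl_one]; simp)
    rwa [mul_one, wl_one] at this
  | cons x rest ih =>
    intro g hg i m hm hlast
    obtain ⟨g', rfl, h2, hx1, hhd⟩ := exists_split' g x rest hg
    rw [mul_assoc]
    have hrest : wl (g' * of m) = rest ++ [⟨i, m⟩] := by
      apply ih g' h2 m hm
      intro z hz
      rcases rest with _ | ⟨y, rest'⟩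
      · simp at hz
      · apply hlast
        rw [List.getLast?_cons_cons]
        exact hz
    have hcnd : ∀ z ∈ (wl (g' * of m)).head?, Sigma.fst z ≠ x.1 := by
      intro z hz
      rw [hrest] at hz
      rcases rest with _ | ⟨y, rest'⟩
      · simp only [List.nil_append, List.head?_cons, Option.mem_def, Option.some.injEq] at hz
        subst hz
        have := hlast x (by simp)
        simp only [ne_eq]
        intro hc
        exact this hc.symm
      · simp only [List.cons_append, List.head?_cons, Option.mem_def, Option.some.injEq] at hz
        subst hz
        exact hhd y (by simp)
    rw [wl_cons' x.2 (g' * of m) hx1 hcnd, hrest, Sigma.eta]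
    rfl

/-- splitting off the last letter -/
lemma exists_split_last : ∀ (l : List (Σ i, M i)) (g : CoprodI M) (z : Σ i, M i),
    wl g = l ++ [z] → ∃ g'', g = g'' * of z.2 ∧ wl g'' = l := by
  intro l
  induction l with
  | nil =>
    intro g z hg
    obtain ⟨g', h1, h2, _, _⟩ := exists_split' g z [] hg
    have : g' = 1 := wl_inj (h2.trans wl_one.symm)
    subst this
    exact ⟨1, by rw [h1, mul_one, one_mul], wl_one⟩
  | cons x l ih =>
    intro g z hg
    obtain ⟨g', rfl, h2, hx1, hhd⟩ := exists_split' g x (l ++ [z]) hg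
    obtain ⟨g₁, rfl, hg₁⟩ := ih g' z h2
    refine ⟨of x.2 * g₁, by rw [mul_assoc], ?_⟩
    rw [wl_cons' x.2 g₁ hx1 ?_, hg₁, Sigma.eta]
    intro w hw
    rw [hg₁] at hw
    apply hhd
    rcases l with _ | ⟨y, l'⟩
    · simp at hw
    · simpa using hw

/-- appending a letter at the end, merge case -/
lemma wl_concat_merge (g : CoprodI M) (l : List (Σ i, M i)) {i : Bool} (u m : M i)
    (hg : wl g = l ++ [⟨i, u⟩]) (hum : u * m ≠ 1) :
    wl (g * of m) = l ++ [⟨i, u * m⟩] := by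
  have hch := wl_chain g
  rw [hg] at hch
  have hlast : ∀ z ∈ l.getLast?, Sigma.fst z ≠ i := by
    intro z hz
    exact (List.isChain_append.mp hch).2.2 z hz ⟨i, u⟩ (by simp)
  obtain ⟨g'', rfl, hg''⟩ := exists_split_last l g ⟨i, u⟩ hg
  rw [mul_assoc,
    show (of (⟨i, u⟩ : Σ i, M i).2 : CoprodI M) * of m = of (u * m) from (map_mul of u m).symm]
  exact wl_concat l g'' hg'' (u * m) hum hlast


/-! ### The cyclic pattern of letters -/

variable (a : M true) (b : M false)

/-- the cyclic sequence of letters `a, b, a⁻¹, b⁻¹` -/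
def ω (k : ℕ) : Σ i, M i :=
  match k % 4 with
  | 0 => ⟨true, a⟩
  | 1 => ⟨false, b⟩
  | 2 => ⟨true, a⁻¹⟩
  | _ => ⟨false, b⁻¹⟩

lemma ω_period (k : ℕ) : ω a b (k + 4) = ω a b k := by
  unfold ω
  rw [Nat.add_mod_right]

lemma mod4 (k : ℕ) : k % 4 = 0 ∨ k % 4 = 1 ∨ k % 4 = 2 ∨ k % 4 = 3 := by omega

lemma ω0 {k : ℕ} (h : k % 4 = 0) : ω a b k = ⟨true, a⟩ := by unfold ω; rw [h]; rfl
lemma ω1 {k : ℕ} (h : k % 4 = 1) : ω a b k = ⟨false, b⟩ := by unfold ω; rw [h]; rfl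
lemma ω2 {k : ℕ} (h : k % 4 = 2) : ω a b k = ⟨true, a⁻¹⟩ := by unfold ω; rw [h]; rfl
lemma ω3 {k : ℕ} (h : k % 4 = 3) : ω a b k = ⟨false, b⁻¹⟩ := by unfold ω; rw [h]; rfl

lemma ω_alt (k : ℕ) : (ω a b (k + 1)).1 = !(ω a b k).1 := by
  rcases mod4 k with h | h | h | h <;>
    [rw [ω0 a b h, ω1 a b (by omega)]; rw [ω1 a b h, ω2 a b (by omega)];
     rw [ω2 a b h, ω3 a b (by omega)]; rw [ω3 a b h, ω0 a b (by omega)]] <;> rfl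

variable {a b}

lemma ω_ne_one (ha : a ≠ 1) (hb : b ≠ 1) (k : ℕ) : (ω a b k).2 ≠ 1 := by
  rcases mod4 k with h | h | h | h <;>
    [rw [ω0 a b h]; rw [ω1 a b h]; rw [ω2 a b h]; rw [ω3 a b h]] <;>
    simp [ha, hb, inv_ne_one]

lemma ω_dist (ha' : a ≠ a⁻¹) (hb' : b ≠ b⁻¹) {k l : ℕ}
    (h1 : ω a b k = ω a b⁻¹ l) (h2 : ω a b (k + 1) = ω a b⁻¹ (l + 1)) : False := by
  rcases mod4 k with h | h | h | h <;> rcases mod4 l with h' | h' | h' | h'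
  · rw [ω0 a b h, ω0 a b⁻¹ h'] at h1
    rw [ω1 a b (by omega), ω1 a b⁻¹ (by omega)] at h2
    simp only [Sigma.mk.inj_iff, heq_eq_eq, inv_inv, true_and, and_true,
      Bool.true_eq_false, Bool.false_eq_true, false_and, and_false] at h1 h2
    all_goals
      first | exact ha' h1 | exact hb' h1 | exact ha' h1.symm | exact hb' h1.symm
            | exact ha' h2 | exact hb' h2 | exact ha' h2.symm | exact hb' h2.symm
  · rw [ω0 a b h, ω1 a b⁻¹ h'] at h1
    rw [ω1 a b (by omega), ω2 a b⁻¹ (by omega)] at h2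
    simp only [Sigma.mk.inj_iff, heq_eq_eq, inv_inv, true_and, and_true,
      Bool.true_eq_false, Bool.false_eq_true, false_and, and_false] at h1 h2
    all_goals
      first | exact ha' h1 | exact hb' h1 | exact ha' h1.symm | exact hb' h1.symm
            | exact ha' h2 | exact hb' h2 | exact ha' h2.symm | exact hb' h2.symm
  · rw [ω0 a b h, ω2 a b⁻¹ h'] at h1
    rw [ω1 a b (by omega), ω3 a b⁻¹ (by omega)] at h2
    simp only [Sigma.mk.inj_iff, heq_eq_eq, inv_inv, true_and, and_true,
      Bool.true_eq_false, Bool.false_eq_true, false_and, and_false] at h1 h2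
    all_goals
      first | exact ha' h1 | exact hb' h1 | exact ha' h1.symm | exact hb' h1.symm
            | exact ha' h2 | exact hb' h2 | exact ha' h2.symm | exact hb' h2.symm
  · rw [ω0 a b h, ω3 a b⁻¹ h'] at h1
    rw [ω1 a b (by omega), ω0 a b⁻¹ (by omega)] at h2
    simp only [Sigma.mk.inj_iff, heq_eq_eq, inv_inv, true_and, and_true,
      Bool.true_eq_false, Bool.false_eq_true, false_and, and_false] at h1 h2
    all_goals
      first | exact ha' h1 | exact hb' h1 | exact ha' h1.symm | exact hb' h1.symm
            | exact ha' h2 | exact hb' h2 | exact ha' h2.symm | exact hb' h2.symm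
  · rw [ω1 a b h, ω0 a b⁻¹ h'] at h1
    rw [ω2 a b (by omega), ω1 a b⁻¹ (by omega)] at h2
    simp only [Sigma.mk.inj_iff, heq_eq_eq, inv_inv, true_and, and_true,
      Bool.true_eq_false, Bool.false_eq_true, false_and, and_false] at h1 h2
    all_goals
      first | exact ha' h1 | exact hb' h1 | exact ha' h1.symm | exact hb' h1.symm
            | exact ha' h2 | exact hb' h2 | exact ha' h2.symm | exact hb' h2.symm
  · rw [ω1 a b h, ω1 a b⁻¹ h'] at h1
    rw [ω2 a b (by omega), ω2 a b⁻¹ (by omega)] at h2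
    simp only [Sigma.mk.inj_iff, heq_eq_eq, inv_inv, true_and, and_true,
      Bool.true_eq_false, Bool.false_eq_true, false_and, and_false] at h1 h2
    all_goals
      first | exact ha' h1 | exact hb' h1 | exact ha' h1.symm | exact hb' h1.symm
            | exact ha' h2 | exact hb' h2 | exact ha' h2.symm | exact hb' h2.symm
  · rw [ω1 a b h, ω2 a b⁻¹ h'] at h1
    rw [ω2 a b (by omega), ω3 a b⁻¹ (by omega)] at h2
    simp only [Sigma.mk.inj_iff, heq_eq_eq, inv_inv, true_and, and_true,
      Bool.true_eq_false, Bool.false_eq_true, false_and, and_false] at h1 h2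
    all_goals
      first | exact ha' h1 | exact hb' h1 | exact ha' h1.symm | exact hb' h1.symm
            | exact ha' h2 | exact hb' h2 | exact ha' h2.symm | exact hb' h2.symm
  · rw [ω1 a b h, ω3 a b⁻¹ h'] at h1
    rw [ω2 a b (by omega), ω0 a b⁻¹ (by omega)] at h2
    simp only [Sigma.mk.inj_iff, heq_eq_eq, inv_inv, true_and, and_true,
      Bool.true_eq_false, Bool.false_eq_true, false_and, and_false] at h1 h2
    all_goals
      first | exact ha' h1 | exact hb' h1 | exact ha' h1.symm | exact hb' h1.symm
            | exact ha' h2 | exact hb' h2 | exact ha' h2.symm | exact hb' h2.symm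
  · rw [ω2 a b h, ω0 a b⁻¹ h'] at h1
    rw [ω3 a b (by omega), ω1 a b⁻¹ (by omega)] at h2
    simp only [Sigma.mk.inj_iff, heq_eq_eq, inv_inv, true_and, and_true,
      Bool.true_eq_false, Bool.false_eq_true, false_and, and_false] at h1 h2
    all_goals
      first | exact ha' h1 | exact hb' h1 | exact ha' h1.symm | exact hb' h1.symm
            | exact ha' h2 | exact hb' h2 | exact ha' h2.symm | exact hb' h2.symm
  · rw [ω2 a b h, ω1 a b⁻¹ h'] at h1
    rw [ω3 a b (by omega), ω2 a b⁻¹ (by omega)] at h2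
    simp only [Sigma.mk.inj_iff, heq_eq_eq, inv_inv, true_and, and_true,
      Bool.true_eq_false, Bool.false_eq_true, false_and, and_false] at h1 h2
    all_goals
      first | exact ha' h1 | exact hb' h1 | exact ha' h1.symm | exact hb' h1.symm
            | exact ha' h2 | exact hb' h2 | exact ha' h2.symm | exact hb' h2.symm
  · rw [ω2 a b h, ω2 a b⁻¹ h'] at h1
    rw [ω3 a b (by omega), ω3 a b⁻¹ (by omega)] at h2
    simp only [Sigma.mk.inj_iff, heq_eq_eq, inv_inv, true_and, and_true,
      Bool.true_eq_false, Bool.false_eq_true, false_and, and_false] at h1 h2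
    all_goals
      first | exact ha' h1 | exact hb' h1 | exact ha' h1.symm | exact hb' h1.symm
            | exact ha' h2 | exact hb' h2 | exact ha' h2.symm | exact hb' h2.symm
  · rw [ω2 a b h, ω3 a b⁻¹ h'] at h1
    rw [ω3 a b (by omega), ω0 a b⁻¹ (by omega)] at h2
    simp only [Sigma.mk.inj_iff, heq_eq_eq, inv_inv, true_and, and_true,
      Bool.true_eq_false, Bool.false_eq_true, false_and, and_false] at h1 h2
    all_goals
      first | exact ha' h1 | exact hb' h1 | exact ha' h1.symm | exact hb' h1.symm
            | exact ha' h2 | exact hb' h2 | exact ha' h2.symm | exact hb' h2.symm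
  · rw [ω3 a b h, ω0 a b⁻¹ h'] at h1
    rw [ω0 a b (by omega), ω1 a b⁻¹ (by omega)] at h2
    simp only [Sigma.mk.inj_iff, heq_eq_eq, inv_inv, true_and, and_true,
      Bool.true_eq_false, Bool.false_eq_true, false_and, and_false] at h1 h2
    all_goals
      first | exact ha' h1 | exact hb' h1 | exact ha' h1.symm | exact hb' h1.symm
            | exact ha' h2 | exact hb' h2 | exact ha' h2.symm | exact hb' h2.symm
  · rw [ω3 a b h, ω1 a b⁻¹ h'] at h1
    rw [ω0 a b (by omega), ω2 a b⁻¹ (by omega)] at h2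
    simp only [Sigma.mk.inj_iff, heq_eq_eq, inv_inv, true_and, and_true,
      Bool.true_eq_false, Bool.false_eq_true, false_and, and_false] at h1 h2
    all_goals
      first | exact ha' h1 | exact hb' h1 | exact ha' h1.symm | exact hb' h1.symm
            | exact ha' h2 | exact hb' h2 | exact ha' h2.symm | exact hb' h2.symm
  · rw [ω3 a b h, ω2 a b⁻¹ h'] at h1
    rw [ω0 a b (by omega), ω3 a b⁻¹ (by omega)] at h2
    simp only [Sigma.mk.inj_iff, heq_eq_eq, inv_inv, true_and, and_true,
      Bool.true_eq_false, Bool.false_eq_true, false_and, and_false] at h1 h2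
    all_goals
      first | exact ha' h1 | exact hb' h1 | exact ha' h1.symm | exact hb' h1.symm
            | exact ha' h2 | exact hb' h2 | exact ha' h2.symm | exact hb' h2.symm
  · rw [ω3 a b h, ω3 a b⁻¹ h'] at h1
    rw [ω0 a b (by omega), ω0 a b⁻¹ (by omega)] at h2
    simp only [Sigma.mk.inj_iff, heq_eq_eq, inv_inv, true_and, and_true,
      Bool.true_eq_false, Bool.false_eq_true, false_and, and_false] at h1 h2
    all_goals
      first | exact ha' h1 | exact hb' h1 | exact ha' h1.symm | exact hb' h1.symm
            | exact ha' h2 | exact hb' h2 | exact ha' h2.symm | exact hb' h2.symm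

/-! ### The two commutator-type elements and their reduced words -/

/-- inclusion of a letter into the free product -/
def el (x : Σ i, M i) : CoprodI M := of x.2

variable (a b) in
/-- the cyclically permuted commutator words -/
def cw (k : ℕ) : CoprodI M :=
  el (ω a b k) * (el (ω a b (k + 1)) * (el (ω a b (k + 2)) * el (ω a b (k + 3))))

lemma el_ω_period (k : ℕ) : el (ω a b (k + 4)) = el (ω a b k) := by rw [ω_period]

/-- `cw` commutes past its first letter, shifting the phase. -/
lemma cw_mul_first (k : ℕ) :
    cw a b k * el (ω a b k) = el (ω a b k) * cw a b (k + 1) := by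
  have h4 : el (ω a b (k + 1 + 3)) = el (ω a b k) := el_ω_period k
  simp only [cw, show k + 1 + 1 = k + 2 from rfl, show k + 1 + 2 = k + 3 from rfl, h4]
  simp [mul_assoc]

lemma cw_mul_inv_last (k : ℕ) :
    cw a b k * (el (ω a b (k + 3)))⁻¹ = (el (ω a b (k + 3)))⁻¹ * cw a b (k + 3) := by
  have h4 : el (ω a b (k + 3 + 1)) = el (ω a b k) := el_ω_period k
  have h5 : el (ω a b (k + 3 + 2)) = el (ω a b (k + 1)) := el_ω_period (k + 1)
  have h6 : el (ω a b (k + 3 + 3)) = el (ω a b (k + 2)) := el_ω_period (k + 2)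
  simp only [cw, h4, h5, h6]
  simp [mul_assoc]

lemma inv_first_mul_cw (k : ℕ) :
    (el (ω a b k))⁻¹ * cw a b k = cw a b (k + 1) * (el (ω a b k))⁻¹ := by
  have h4 : el (ω a b (k + 1 + 3)) = el (ω a b k) := el_ω_period k
  simp only [cw, show k + 1 + 1 = k + 2 from rfl, show k + 1 + 2 = k + 3 from rfl, h4]
  simp [mul_assoc]

lemma last_mul_cw (k : ℕ) :
    el (ω a b (k + 3)) * cw a b k = cw a b (k + 3) * el (ω a b (k + 3)) := by
  have h4 : el (ω a b (k + 3 + 1)) = el (ω a b k) := el_ω_period k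
  have h5 : el (ω a b (k + 3 + 2)) = el (ω a b (k + 1)) := el_ω_period (k + 1)
  have h6 : el (ω a b (k + 3 + 3)) = el (ω a b (k + 2)) := el_ω_period (k + 2)
  simp only [cw, h4, h5, h6]
  simp [mul_assoc]

lemma bool_not_ne (c : Bool) : (!c) ≠ c := by cases c <;> simp

lemma wl_el {x : Σ i, M i} (hx : x.2 ≠ 1) : wl (el x : CoprodI M) = [x] := by
  have h := wl_cons' x.2 1 hx (by rw [wl_one]; simp)
  rw [mul_one, wl_one, Sigma.eta] at h
  exact h

variable (a b) in
lemma wl_cw_mul (ha : a ≠ 1) (hb : b ≠ 1) (k : ℕ) (g : CoprodI M)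
    (hcond : ∀ z ∈ (wl g).head?, Sigma.fst z ≠ (ω a b (k + 3)).1) :
    wl (cw a b k * g) =
      ω a b k :: ω a b (k + 1) :: ω a b (k + 2) :: ω a b (k + 3) :: wl g := by
  rw [cw, mul_assoc, mul_assoc, mul_assoc]
  have s1 : wl (el (ω a b (k + 3)) * g) = ω a b (k + 3) :: wl g := by
    have h := wl_cons' (ω a b (k + 3)).2 g (ω_ne_one ha hb _) hcond
    rwa [Sigma.eta] at h
  have s2 : wl (el (ω a b (k + 2)) * (el (ω a b (k + 3)) * g)) =
      ω a b (k + 2) :: ω a b (k + 3) :: wl g := by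
    have h := wl_cons' (ω a b (k + 2)).2 (el (ω a b (k + 3)) * g) (ω_ne_one ha hb _) ?_
    · rwa [Sigma.eta, s1] at h
    · rw [s1]
      intro z hz
      simp only [List.head?_cons, Option.mem_def, Option.some.injEq] at hz
      subst hz
      rw [show k + 3 = (k + 2) + 1 from rfl, ω_alt]
      exact bool_not_ne _
  have s3 : wl (el (ω a b (k + 1)) * (el (ω a b (k + 2)) * (el (ω a b (k + 3)) * g))) =
      ω a b (k + 1) :: ω a b (k + 2) :: ω a b (k + 3) :: wl g := by
    have h := wl_cons' (ω a b (k + 1)).2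
      (el (ω a b (k + 2)) * (el (ω a b (k + 3)) * g)) (ω_ne_one ha hb _) ?_
    · rwa [Sigma.eta, s2] at h
    · rw [s2]
      intro z hz
      simp only [List.head?_cons, Option.mem_def, Option.some.injEq] at hz
      subst hz
      rw [show k + 2 = (k + 1) + 1 from rfl, ω_alt]
      exact bool_not_ne _
  have h := wl_cons' (ω a b k).2
    (el (ω a b (k + 1)) * (el (ω a b (k + 2)) * (el (ω a b (k + 3)) * g)))
    (ω_ne_one ha hb _) ?_
  · rwa [Sigma.eta, s3] at h
  · rw [s3]
    intro z hz
    simp only [List.head?_cons, Option.mem_def, Option.some.injEq] at hz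
    subst hz
    rw [ω_alt]
    exact bool_not_ne _

variable (a b) in
lemma wl_cw (ha : a ≠ 1) (hb : b ≠ 1) (k : ℕ) :
    wl (cw a b k : CoprodI M) = [ω a b k, ω a b (k + 1), ω a b (k + 2), ω a b (k + 3)] := by
  have h := wl_cw_mul a b ha hb k 1 (by rw [wl_one]; simp)
  rwa [mul_one, wl_one] at h

variable (a b) in
lemma wl_cw_mul_merge (ha : a ≠ 1) (hb : b ≠ 1) (k : ℕ) (g : CoprodI M)
    (s : M (ω a b (k + 3)).1) (rest : List (Σ i, M i))
    (hwl : wl g = ⟨(ω a b (k + 3)).1, s⟩ :: rest)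
    (hmer : (ω a b (k + 3)).2 * s ≠ 1) :
    wl (cw a b k * g) = ω a b k :: ω a b (k + 1) :: ω a b (k + 2) ::
      ⟨(ω a b (k + 3)).1, (ω a b (k + 3)).2 * s⟩ :: rest := by
  obtain ⟨g', hsplit, hrest, hs1, hhd⟩ := exists_split' g _ rest hwl
  rw [cw, mul_assoc, mul_assoc, mul_assoc]
  have e3g : el (ω a b (k + 3)) * g = of ((ω a b (k + 3)).2 * s) * g' := by
    rw [hsplit, el, ← mul_assoc, ← map_mul]
  have s1 : wl (el (ω a b (k + 3)) * g) =
      ⟨(ω a b (k + 3)).1, (ω a b (k + 3)).2 * s⟩ :: rest := by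
    rw [e3g]
    have h := wl_cons' ((ω a b (k + 3)).2 * s) g' hmer ?_
    · rwa [hrest] at h
    · rw [hrest]
      exact hhd
  have s2 : wl (el (ω a b (k + 2)) * (el (ω a b (k + 3)) * g)) =
      ω a b (k + 2) :: ⟨(ω a b (k + 3)).1, (ω a b (k + 3)).2 * s⟩ :: rest := by
    have h := wl_cons' (ω a b (k + 2)).2 (el (ω a b (k + 3)) * g) (ω_ne_one ha hb _) ?_
    · rwa [Sigma.eta, s1] at h
    · rw [s1]
      intro z hz
      simp only [List.head?_cons, Option.mem_def, Option.some.injEq] at hz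
      subst hz
      show (ω a b (k + 3)).1 ≠ (ω a b (k + 2)).1
      rw [show k + 3 = (k + 2) + 1 from rfl, ω_alt]
      exact bool_not_ne _
  have s3 : wl (el (ω a b (k + 1)) * (el (ω a b (k + 2)) * (el (ω a b (k + 3)) * g))) =
      ω a b (k + 1) :: ω a b (k + 2) ::
        ⟨(ω a b (k + 3)).1, (ω a b (k + 3)).2 * s⟩ :: rest := by
    have h := wl_cons' (ω a b (k + 1)).2
      (el (ω a b (k + 2)) * (el (ω a b (k + 3)) * g)) (ω_ne_one ha hb _) ?_
    · rwa [Sigma.eta, s2] at h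
    · rw [s2]
      intro z hz
      simp only [List.head?_cons, Option.mem_def, Option.some.injEq] at hz
      subst hz
      rw [show k + 2 = (k + 1) + 1 from rfl, ω_alt]
      exact bool_not_ne _
  have h := wl_cons' (ω a b k).2
    (el (ω a b (k + 1)) * (el (ω a b (k + 2)) * (el (ω a b (k + 3)) * g)))
    (ω_ne_one ha hb _) ?_
  · rwa [Sigma.eta, s3] at h
  · rw [s3]
    intro z hz
    simp only [List.head?_cons, Option.mem_def, Option.some.injEq] at hz
    subst hz
    rw [ω_alt]
    exact bool_not_ne _

variable (a b) in
lemma wl_mul_cw (ha : a ≠ 1) (hb : b ≠ 1) (l : ℕ) (g : CoprodI M)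
    (hcond : ∀ z ∈ (wl g).getLast?, Sigma.fst z ≠ (ω a b l).1) :
    wl (g * cw a b l) =
      wl g ++ [ω a b l, ω a b (l + 1), ω a b (l + 2), ω a b (l + 3)] := by
  have hassoc : g * cw a b l =
      (((g * el (ω a b l)) * el (ω a b (l + 1))) * el (ω a b (l + 2))) * el (ω a b (l + 3)) := by
    rw [cw]
    simp [mul_assoc]
  rw [hassoc]
  have s1 : wl (g * el (ω a b l)) = wl g ++ [ω a b l] := by
    have h := wl_concat (wl g) g rfl (ω a b l).2 (ω_ne_one ha hb _) hcond
    rwa [Sigma.eta] at h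
  have s2 : wl ((g * el (ω a b l)) * el (ω a b (l + 1))) =
      wl g ++ [ω a b l, ω a b (l + 1)] := by
    have h := wl_concat _ (g * el (ω a b l)) s1 (ω a b (l + 1)).2 (ω_ne_one ha hb _) ?_
    · exact h.trans (by simp)
    · intro z hz
      rw [List.getLast?_concat] at hz
      simp only [Option.mem_def, Option.some.injEq] at hz
      subst hz
      intro hc
      exact bool_not_ne _ ((ω_alt a b l) ▸ hc.symm)
  have s3 : wl (((g * el (ω a b l)) * el (ω a b (l + 1))) * el (ω a b (l + 2))) =
      wl g ++ [ω a b l, ω a b (l + 1), ω a b (l + 2)] := by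
    have h := wl_concat _ ((g * el (ω a b l)) * el (ω a b (l + 1))) s2
      (ω a b (l + 2)).2 (ω_ne_one ha hb _) ?_
    · exact h.trans (by simp)
    · intro z hz
      rw [show wl g ++ [ω a b l, ω a b (l + 1)] =
        (wl g ++ [ω a b l]) ++ [ω a b (l + 1)] by simp, List.getLast?_concat] at hz
      simp only [Option.mem_def, Option.some.injEq] at hz
      subst hz
      intro hc
      exact bool_not_ne _ ((ω_alt a b (l + 1)) ▸ hc.symm)
  have h := wl_concat _ (((g * el (ω a b l)) * el (ω a b (l + 1))) * el (ω a b (l + 2))) s3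
    (ω a b (l + 3)).2 (ω_ne_one ha hb _) ?_
  · exact h.trans (by simp)
  · intro z hz
    rw [show wl g ++ [ω a b l, ω a b (l + 1), ω a b (l + 2)] =
      (wl g ++ [ω a b l, ω a b (l + 1)]) ++ [ω a b (l + 2)] by simp,
      List.getLast?_concat] at hz
    simp only [Option.mem_def, Option.some.injEq] at hz
    subst hz
    intro hc
    exact bool_not_ne _ ((ω_alt a b (l + 2)) ▸ hc.symm)

variable (a b) in
lemma wl_mul_cw_merge (ha : a ≠ 1) (hb : b ≠ 1) (l : ℕ) (g : CoprodI M)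
    (l' : List (Σ i, M i)) (t : M (ω a b l).1)
    (hwl : wl g = l' ++ [⟨(ω a b l).1, t⟩])
    (hmer : t * (ω a b l).2 ≠ 1) :
    wl (g * cw a b l) = l' ++ [⟨(ω a b l).1, t * (ω a b l).2⟩,
      ω a b (l + 1), ω a b (l + 2), ω a b (l + 3)] := by
  have hassoc : g * cw a b l =
      (((g * el (ω a b l)) * el (ω a b (l + 1))) * el (ω a b (l + 2))) * el (ω a b (l + 3)) := by
    rw [cw]
    simp [mul_assoc]
  rw [hassoc]
  have s1 : wl (g * el (ω a b l)) = l' ++ [⟨(ω a b l).1, t * (ω a b l).2⟩] := by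
    exact wl_concat_merge g l' t (ω a b l).2 hwl hmer
  have s2 : wl ((g * el (ω a b l)) * el (ω a b (l + 1))) =
      l' ++ [⟨(ω a b l).1, t * (ω a b l).2⟩, ω a b (l + 1)] := by
    have h := wl_concat _ (g * el (ω a b l)) s1 (ω a b (l + 1)).2 (ω_ne_one ha hb _) ?_
    · exact h.trans (by simp)
    · intro z hz
      rw [List.getLast?_concat] at hz
      simp only [Option.mem_def, Option.some.injEq] at hz
      subst hz
      show (ω a b l).1 ≠ (ω a b (l + 1)).1
      intro hc
      exact bool_not_ne _ ((ω_alt a b l) ▸ hc.symm)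
  have s3 : wl (((g * el (ω a b l)) * el (ω a b (l + 1))) * el (ω a b (l + 2))) =
      l' ++ [⟨(ω a b l).1, t * (ω a b l).2⟩, ω a b (l + 1), ω a b (l + 2)] := by
    have h := wl_concat _ ((g * el (ω a b l)) * el (ω a b (l + 1))) s2
      (ω a b (l + 2)).2 (ω_ne_one ha hb _) ?_
    · exact h.trans (by simp)
    · intro z hz
      rw [show l' ++ [⟨(ω a b l).1, t * (ω a b l).2⟩, ω a b (l + 1)] =
        (l' ++ [⟨(ω a b l).1, t * (ω a b l).2⟩]) ++ [ω a b (l + 1)] by simp,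
        List.getLast?_concat] at hz
      simp only [Option.mem_def, Option.some.injEq] at hz
      subst hz
      intro hc
      exact bool_not_ne _ ((ω_alt a b (l + 1)) ▸ hc.symm)
  have h := wl_concat _ (((g * el (ω a b l)) * el (ω a b (l + 1))) * el (ω a b (l + 2))) s3
    (ω a b (l + 3)).2 (ω_ne_one ha hb _) ?_
  · exact h.trans (by simp)
  · intro z hz
    rw [show l' ++ [⟨(ω a b l).1, t * (ω a b l).2⟩, ω a b (l + 1), ω a b (l + 2)] =
      (l' ++ [⟨(ω a b l).1, t * (ω a b l).2⟩, ω a b (l + 1)]) ++ [ω a b (l + 2)] by simp,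
      List.getLast?_concat] at hz
    simp only [Option.mem_def, Option.some.injEq] at hz
    subst hz
    intro hc
    exact bool_not_ne _ ((ω_alt a b (l + 2)) ▸ hc.symm)

lemma el_def (x : Σ i, M i) : (el x : CoprodI M) = of x.2 := rfl

variable (a b) in
lemma ω_alt3 (k : ℕ) : (ω a b (k + 3)).1 = !(ω a b k).1 := by
  rw [show k + 3 = (k + 2) + 1 from rfl, ω_alt, show k + 2 = (k + 1) + 1 from rfl, ω_alt, ω_alt]
  simp

variable (a b) in
theorem main (ha : a ≠ 1) (hb : b ≠ 1) (ha' : a ≠ a⁻¹) (hb' : b ≠ b⁻¹) :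
    ∀ n : ℕ, ∀ g : CoprodI M, (wl g).length = n →
      ∀ k m : ℕ, cw a b k * g ≠ g * cw a b⁻¹ m := by
  have hb2 : b⁻¹ ≠ 1 := inv_ne_one.mpr hb
  intro n
  induction n using Nat.strong_induction_on with
  | _ n IH =>
  intro g hlen k m heq
  rcases hwl : wl g with _ | ⟨x, rest⟩
  · -- `g` is trivial
    have hg1 : g = 1 := wl_inj (hwl.trans wl_one.symm)
    subst hg1
    rw [mul_one, one_mul] at heq
    have hEq := congrArg wl heq
    rw [wl_cw a b ha hb k, wl_cw a b⁻¹ ha hb2 m] at hEq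
    simp only [List.cons.injEq] at hEq
    exact ω_dist ha' hb' hEq.1 hEq.2.1
  · have hne : wl g ≠ [] := by rw [hwl]; simp
    obtain ⟨l', z, hconc'⟩ := (List.eq_nil_or_concat (wl g)).resolve_left hne
    have hconc : wl g = l' ++ [z] := by rw [hconc', List.concat_eq_append]
    have hlen1 : rest.length + 1 = n := by
      rw [← hlen, hwl, List.length_cons]
    have hlen2 : l'.length + 1 = n := by
      rw [← hlen, hconc, List.length_append, List.length_singleton]
    by_cases hA : x = ω a b k
    · -- cancel the first letter of `cw a b k`
      obtain ⟨g', hg, hrest, -, -⟩ := exists_split' g x rest hwl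
      rw [hg, hA, ← el_def, ← mul_assoc, cw_mul_first, mul_assoc, mul_assoc] at heq
      exact IH rest.length (by omega) g' (congrArg List.length hrest) (k + 1) m (mul_left_cancel heq)
    by_cases hB : x = ⟨(ω a b (k + 3)).1, (ω a b (k + 3)).2⁻¹⟩
    · -- cancel the (inverse of the) last letter of `cw a b k`
      obtain ⟨g', hg, hrest, -, -⟩ := exists_split' g x rest hwl
      have hof : (of (⟨(ω a b (k + 3)).1, (ω a b (k + 3)).2⁻¹⟩ : Σ i, M i).2 : CoprodI M)
          = (el (ω a b (k + 3)))⁻¹ := by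
        rw [el_def]
        exact map_inv of _
      rw [hg, hB, hof, ← mul_assoc, cw_mul_inv_last, mul_assoc, mul_assoc] at heq
      exact IH rest.length (by omega) g' (congrArg List.length hrest) (k + 3) m (mul_left_cancel heq)
    by_cases hC : z = ⟨(ω a b⁻¹ m).1, (ω a b⁻¹ m).2⁻¹⟩
    · -- cancel the first letter of `cw a b⁻¹ m`
      obtain ⟨g'', hg, hl'⟩ := exists_split_last l' g z hconc
      have hof : (of (⟨(ω a b⁻¹ m).1, (ω a b⁻¹ m).2⁻¹⟩ : Σ i, M i).2 : CoprodI M)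
          = (el (ω a b⁻¹ m))⁻¹ := by
        rw [el_def]
        exact map_inv of _
      rw [hg, hC, hof, mul_assoc, inv_first_mul_cw, ← mul_assoc, ← mul_assoc] at heq
      exact IH l'.length (by omega) g'' (congrArg List.length hl') k (m + 1) (mul_right_cancel heq)
    by_cases hD : z = ω a b⁻¹ (m + 3)
    · -- cancel the last letter of `cw a b⁻¹ m`
      obtain ⟨g'', hg, hl'⟩ := exists_split_last l' g z hconc
      rw [hg, hD, ← el_def, mul_assoc, last_mul_cw, ← mul_assoc, ← mul_assoc] at heq
      exact IH l'.length (by omega) g'' (congrArg List.length hl') k (m + 3) (mul_right_cancel heq)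
    -- no cancellation at all: compare the reduced words
    have hEq := congrArg wl heq
    by_cases hj : x.1 = (ω a b (k + 3)).1
    · -- the last letter of `cw a b k` merges with the first letter of `g`
      obtain ⟨j, s⟩ := x
      subst hj
      have hmer : (ω a b (k + 3)).2 * s ≠ 1 := by
        intro hc
        apply hB
        rw [eq_inv_of_mul_eq_one_right hc]
      have hL := wl_cw_mul_merge a b ha hb k g s rest hwl hmer
      by_cases hk : z.1 = (ω a b⁻¹ m).1
      · -- merge on both sides
        obtain ⟨kk, t⟩ := z
        subst hk
        have hmer' : t * (ω a b⁻¹ m).2 ≠ 1 := by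
          intro hc
          apply hC
          rw [eq_inv_of_mul_eq_one_left hc]
        have hR := wl_mul_cw_merge a b⁻¹ ha hb2 m g l' t hconc hmer'
        rw [hL, hR] at hEq
        rcases l' with _ | ⟨y, l''⟩
        · -- both sides have length 4
          have hrest : rest = [] := by
            have : rest.length = 0 := by
              simp only [List.length_nil] at hlen2
              omega
            exact List.length_eq_zero_iff.mp this
          subst hrest
          simp only [List.nil_append, List.cons.injEq, and_true] at hEq
          exact ω_dist ha' hb' hEq.2.1 hEq.2.2.1
        · -- compare first letters: indices clash
          have hxy : (⟨(ω a b (k + 3)).1, s⟩ : Σ i, M i) = y := by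
            rw [hconc] at hwl
            simp only [List.cons_append, List.cons.injEq] at hwl
            exact hwl.1.symm
          simp only [List.cons_append, List.cons.injEq] at hEq
          have h1 : ω a b k = y := hEq.1
          have : (ω a b k).1 = (ω a b (k + 3)).1 := by
            rw [h1, ← hxy]
          rw [ω_alt3] at this
          exact bool_not_ne _ this.symm
      · -- merge left, no merge right: length clash
        have hR := wl_mul_cw a b⁻¹ ha hb2 m g ?_
        · rw [hL, hR] at hEq
          have := congrArg List.length hEq
          simp only [hwl, List.length_cons, List.length_append, List.length_nil] at this hlen
          omega
        · intro w hw
          rw [hconc, List.getLast?_concat] at hw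
          simp only [Option.mem_def, Option.some.injEq] at hw
          subst hw
          exact hk
    · -- no merge on the left
      have hL := wl_cw_mul a b ha hb k g ?_
      swap
      · intro w hw
        rw [hwl] at hw
        simp only [List.head?_cons, Option.mem_def, Option.some.injEq] at hw
        subst hw
        exact hj
      by_cases hk : z.1 = (ω a b⁻¹ m).1
      · -- no merge left, merge right: length clash
        obtain ⟨kk, t⟩ := z
        subst hk
        have hmer' : t * (ω a b⁻¹ m).2 ≠ 1 := by
          intro hc
          apply hC
          rw [eq_inv_of_mul_eq_one_left hc]
        have hR := wl_mul_cw_merge a b⁻¹ ha hb2 m g l' t hconc hmer'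
        rw [hL, hR] at hEq
        have := congrArg List.length hEq
        simp only [List.length_cons, List.length_append, List.length_nil, hlen] at this
        omega
      · -- no merges: the first letter of `g` must be `ω a b k`
        have hR := wl_mul_cw a b⁻¹ ha hb2 m g ?_
        · rw [hL, hR, hwl, List.cons_append, List.cons.injEq] at hEq
          exact hA hEq.1.symm
        · intro w hw
          rw [hconc, List.getLast?_concat] at hw
          simp only [Option.mem_def, Option.some.injEq] at hw
          subst hw
          exact hk

def Mf (A B : Type) : Bool → Type
  | true => A
  | false => B

instance instGroupMf {A B : Type} [Group A] [Group B] : ∀ i, Group (Mf A B i)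
  | true => ‹Group A›
  | false => ‹Group B›

end Stmt2

open Stmt2 in
theorem stmt_2' {A B : Type} [Group A] [Group B] (a : A) (b : B)
    (ha : a ≠ 1) (hb : b ≠ 1) (ha' : a ≠ a⁻¹) (hb' : b ≠ b⁻¹) :
    ¬ IsConj ((inl a : A ∗ B) * inr b * inl a⁻¹ * inr b⁻¹)
      ((inl a : A ∗ B) * inr b⁻¹ * inl a⁻¹ * inr b) := by
  classical
  intro hconj
  set φ : A ∗ B →* Monoid.CoprodI (Mf A B) :=
    Coprod.lift (Monoid.CoprodI.of (M := Mf A B) (i := true))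
      (Monoid.CoprodI.of (M := Mf A B) (i := false)) with hφdef
  have hφ := (φ.map_isConj hconj).symm
  have ha2 : (a : Mf A B true) ≠ 1 := ha
  have hb2 : (b : Mf A B false) ≠ 1 := hb
  have ha2' : (a : Mf A B true) ≠ a⁻¹ := ha'
  have hb2' : (b : Mf A B false) ≠ b⁻¹ := hb'
  have hx : φ ((inl a : A ∗ B) * inr b * inl a⁻¹ * inr b⁻¹) = cw (M := Mf A B) a b 0 := by
    rw [map_mul, map_mul, map_mul]
    simp only [hφdef, Coprod.lift_apply_inl, Coprod.lift_apply_inr]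
    unfold cw
    rw [ω0 (M := Mf A B) a b (show 0 % 4 = 0 from rfl),
      ω1 (M := Mf A B) a b (show (0 + 1) % 4 = 1 from rfl),
      ω2 (M := Mf A B) a b (show (0 + 2) % 4 = 2 from rfl),
      ω3 (M := Mf A B) a b (show (0 + 3) % 4 = 3 from rfl), el_def, el_def,
      el_def, el_def]
    simp only [map_inv, inv_inv, mul_assoc]
    rfl
  have hy : φ ((inl a : A ∗ B) * inr b⁻¹ * inl a⁻¹ * inr b) = cw (M := Mf A B) a b⁻¹ 0 := by
    rw [map_mul, map_mul, map_mul]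
    simp only [hφdef, Coprod.lift_apply_inl, Coprod.lift_apply_inr]
    unfold cw
    rw [ω0 (M := Mf A B) a b⁻¹ (show 0 % 4 = 0 from rfl),
      ω1 (M := Mf A B) a b⁻¹ (show (0 + 1) % 4 = 1 from rfl),
      ω2 (M := Mf A B) a b⁻¹ (show (0 + 2) % 4 = 2 from rfl),
      ω3 (M := Mf A B) a b⁻¹ (show (0 + 3) % 4 = 3 from rfl), el_def, el_def,
      el_def, el_def]
    simp only [inv_inv, mul_assoc]
    erw [inv_inv]
    rfl
  rw [hx, hy] at hφ
  obtain ⟨u, hu⟩ := hφ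
  have hu' : cw (M := Mf A B) a b 0 * ↑u = ↑u * cw (M := Mf A B) a b⁻¹ 0 := hu.symm
  exact main (M := Mf A B) a b ha2 hb2 ha2' hb2'
    (wl (↑u : Monoid.CoprodI (Mf A B))).length ↑u rfl 0 0 hu'

/-- In the free product `A ∗ B`, if `a ∈ A` and `b ∈ B` are nontrivial and
`a ≠ a⁻¹`, `b ≠ b⁻¹`, then the commutators `a b a⁻¹ b⁻¹` and `a b⁻¹ a⁻¹ b` are not
conjugate in `A ∗ B`. -/
theorem stmt_2 {A B : Type} [Group A] [Group B] (a : A) (b : B)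
    (ha : a ≠ 1) (hb : b ≠ 1) (ha' : a ≠ a⁻¹) (hb' : b ≠ b⁻¹) :
    ¬ IsConj ((inl a : A ∗ B) * inr b * inl a⁻¹ * inr b⁻¹)
      ((inl a : A ∗ B) * inr b⁻¹ * inl a⁻¹ * inr b) :=
  stmt_2' a b ha hb ha' hb'
end

section
/- Let G₁, G₂ be groups with nontrivial elements g₁ ∈ G₁ and g₂ ∈ G₂, and let G = G₁ * G₂ be their free product. Set h = g₁ g₂ ∈ G. Then the conjugacy classes of g₁ g₂ h = g₁ g₂ g₁ g₂ and g₂ g₁ h = g₂ g₁² g₂ in G are distinct. -/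
open Monoid Coprod

namespace Stmt4Aux

open Monoid.CoprodI

variable {ι : Type} [DecidableEq ι] {M : ι → Type} [∀ i, Group (M i)]
  [∀ i, DecidableEq (M i)]

/-- Length of the reduced word of an element of the free product. -/
noncomputable def len (g : CoprodI M) : ℕ := (Word.equiv g).toList.length

lemma len_rcons_le {i : ι} (p : Word.Pair M i) :
    (Word.rcons p).toList.length ≤ p.tail.toList.length + 1 := by
  rw [Word.rcons]
  split <;> simp [Word.cons]

lemma tail_len_le_rcons {i : ι} (p : Word.Pair M i) :
    p.tail.toList.length ≤ (Word.rcons p).toList.length := by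
  rw [Word.rcons]
  split <;> simp [Word.cons]

lemma len_of_smul_le {i : ι} (m : M i) (w : Word M) :
    (CoprodI.of m • w).toList.length ≤ w.toList.length + 1 := by
  rw [Word.of_smul_def]
  refine le_trans (len_rcons_le _) ?_
  show (Word.equivPair i w).tail.toList.length + 1 ≤ w.toList.length + 1
  have hw : (Word.rcons (Word.equivPair i w)).toList.length = w.toList.length := by
    rw [← Word.equivPair_symm, Equiv.symm_apply_apply]
  have := tail_len_le_rcons (Word.equivPair i w)
  omega

lemma len_prod_smul (w' w : Word M) :
    (Word.prod w' • w).toList.length ≤ w'.toList.length + w.toList.length := by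
  induction w' using Word.consRecOn with
  | empty => simp
  | cons i m w'' h1 h2 ih =>
    rw [Word.prod_cons, mul_smul]
    refine le_trans (len_of_smul_le _ _) ?_
    simp only [Word.cons, List.length_cons]
    omega

lemma prod_equiv (g : CoprodI M) : Word.prod (Word.equiv g) = g :=
  Word.equiv.symm_apply_apply g

lemma len_mul_le (g h : CoprodI M) : len (g * h) ≤ len g + len h := by
  have e1 : Word.equiv (g * h) = (g * h) • Word.empty := rfl
  have e2 : Word.equiv h = h • Word.empty := rfl
  have h1 : Word.equiv (g * h) = g • Word.equiv h := by rw [e1, e2, mul_smul]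
  calc len (g * h) = (g • Word.equiv h).toList.length := by rw [len, h1]
    _ = (Word.prod (Word.equiv g) • Word.equiv h).toList.length := by rw [prod_equiv]
    _ ≤ (Word.equiv g).toList.length + (Word.equiv h).toList.length := len_prod_smul _ _
    _ = len g + len h := rfl

lemma len_of_le {i : ι} (m : M i) : len (CoprodI.of m) ≤ 1 := by
  have h1 : Word.equiv (CoprodI.of m : CoprodI M) = CoprodI.of m • Word.empty := rfl
  rw [len, h1]
  simpa using len_of_smul_le m Word.empty

lemma len_pow_le {g : CoprodI M} {c : ℕ} (hg : len g ≤ c) (n : ℕ) :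
    len (g ^ n) ≤ n * c := by
  induction n with
  | zero => simp [len, Word.empty]; rfl
  | succ n ih =>
    rw [pow_succ]
    calc len (g ^ n * g) ≤ len (g ^ n) + len g := len_mul_le _ _
      _ ≤ n * c + c := Nat.add_le_add ih hg
      _ = (n + 1) * c := by ring

lemma exists_alt_word {i j : ι} (hij : i ≠ j) {a : M i} {b : M j}
    (ha : a ≠ 1) (hb : b ≠ 1) (n : ℕ) :
    ∃ w : Word M, Word.prod w = (CoprodI.of a * CoprodI.of b) ^ n ∧
      w.toList.length = 2 * n ∧ Word.fstIdx w ≠ some j := by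
  induction n with
  | zero =>
    refine ⟨Word.empty, by simp, by simp [Word.empty], ?_⟩
    simp [Word.fstIdx, Word.empty]
  | succ n ih =>
    obtain ⟨w, hp, hl, hf⟩ := ih
    have hfb : Word.fstIdx (Word.cons b w hf hb) = some j := Word.fstIdx_cons _ _ _ _
    have hfb' : Word.fstIdx (Word.cons b w hf hb) ≠ some i := by
      rw [hfb]; exact fun hc => hij (Option.some_injective _ hc).symm
    refine ⟨Word.cons a (Word.cons b w hf hb) hfb' ha, ?_, ?_, ?_⟩
    · rw [Word.prod_cons, Word.prod_cons, hp, pow_succ']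
      rw [mul_assoc]
    · simp only [Word.cons, List.length_cons]
      omega
    · rw [Word.fstIdx_cons]
      exact fun hc => hij (Option.some_injective _ hc)

lemma len_alt {i j : ι} (hij : i ≠ j) {a : M i} {b : M j}
    (ha : a ≠ 1) (hb : b ≠ 1) (n : ℕ) :
    len ((CoprodI.of a * CoprodI.of b) ^ n) = 2 * n := by
  obtain ⟨w, hp, hl, -⟩ := exists_alt_word hij ha hb n
  have h1 : Word.equiv.symm w = Word.prod w := rfl
  have h2 : Word.equiv ((CoprodI.of a * CoprodI.of b) ^ n) = w := by
    rw [← hp, ← h1, Equiv.apply_symm_apply]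
  rw [len, h2, hl]

lemma aux_main {i j : ι} (hij : i ≠ j) {a : M i} {b : M j}
    (ha : a ≠ 1) (hb : b ≠ 1) :
    ¬ IsConj (CoprodI.of a * CoprodI.of b * (CoprodI.of a * CoprodI.of b))
      (CoprodI.of b * CoprodI.of a * (CoprodI.of a * CoprodI.of b)) := by
  intro hc
  rw [isConj_iff] at hc
  obtain ⟨c, hc⟩ := hc
  set x : CoprodI M := CoprodI.of a * CoprodI.of b with hx
  set y : CoprodI M := CoprodI.of (a * a) * CoprodI.of (b * b) with hy
  have hkey : ((CoprodI.of b)⁻¹ * c) * (x * x) * ((CoprodI.of b)⁻¹ * c)⁻¹ = y := by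
    rw [hy, map_mul, map_mul]
    rw [mul_inv_rev, inv_inv]
    rw [show ((CoprodI.of b)⁻¹ * c) * (x * x) * (c⁻¹ * CoprodI.of b)
        = (CoprodI.of b)⁻¹ * (c * (x * x) * c⁻¹) * CoprodI.of b by group]
    rw [hc, hx]
    group
  set v : CoprodI M := (CoprodI.of b)⁻¹ * c with hv
  have hpow : ∀ n : ℕ, v * (x * x) ^ n * v⁻¹ = y ^ n := by
    intro n
    rw [← conj_pow, hkey]
  set L : ℕ := len v + len v⁻¹ with hL
  have hupper : ∀ n : ℕ, len ((x * x) ^ n) ≤ L + 2 * n := by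
    intro n
    have h1 : (x * x) ^ n = v⁻¹ * y ^ n * v := by
      rw [← hpow n]; group
    have hylen : len y ≤ 2 := by
      calc len y ≤ len (CoprodI.of (a * a)) + len (CoprodI.of (b * b)) := len_mul_le _ _
        _ ≤ 2 := by have := len_of_le (M := M) (a * a); have := len_of_le (M := M) (b * b); omega
    have hyn : len (y ^ n) ≤ n * 2 := len_pow_le hylen n
    calc len ((x * x) ^ n) = len (v⁻¹ * y ^ n * v) := by rw [h1]
      _ ≤ len (v⁻¹ * y ^ n) + len v := len_mul_le _ _
      _ ≤ len v⁻¹ + len (y ^ n) + len v := by have := len_mul_le v⁻¹ (y ^ n); omega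
      _ ≤ L + 2 * n := by omega
  have hlower : ∀ n : ℕ, len ((x * x) ^ n) = 4 * n := by
    intro n
    have : (x * x) ^ n = x ^ (2 * n) := by rw [pow_mul, pow_two]
    rw [this, hx, len_alt hij ha hb]
    ring
  have h1 := hupper (L + 1)
  rw [hlower (L + 1)] at h1
  omega

end Stmt4Aux

/-- The two-element family of groups. -/
def Stmt4Fam (G₁ G₂ : Type) : Bool → Type := fun b => bif b then G₂ else G₁

instance {G₁ G₂ : Type} [Group G₁] [Group G₂] : ∀ b, Group (Stmt4Fam G₁ G₂ b) :=
  fun b => match b with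
  | false => ‹Group G₁›
  | true => ‹Group G₂›

/-- Let `G₁`, `G₂` be groups with nontrivial elements `g₁ ∈ G₁`, `g₂ ∈ G₂`,
and let `G = G₁ ∗ G₂` be their free product.  With `h = g₁ g₂`, the conjugacy classes of
`g₁ g₂ h = g₁ g₂ g₁ g₂` and `g₂ g₁ h = g₂ g₁² g₂` in `G` are distinct. -/
theorem stmt_4 {G₁ G₂ : Type} [Group G₁] [Group G₂] (g₁ : G₁) (g₂ : G₂)
    (h₁ : g₁ ≠ 1) (h₂ : g₂ ≠ 1) :
    ConjClasses.mk ((inl g₁ : G₁ ∗ G₂) * inr g₂ * (inl g₁ * inr g₂)) ≠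
      ConjClasses.mk ((inr g₂ : G₁ ∗ G₂) * inl g₁ * (inl g₁ * inr g₂)) := by
  intro hcon
  rw [ConjClasses.mk_eq_mk_iff_isConj] at hcon
  letI : ∀ b, DecidableEq (Stmt4Fam G₁ G₂ b) := fun _ => Classical.decEq _
  let φ : G₁ ∗ G₂ →* CoprodI (Stmt4Fam G₁ G₂) :=
    Coprod.lift (CoprodI.of (M := Stmt4Fam G₁ G₂) (i := false)) (CoprodI.of (M := Stmt4Fam G₁ G₂) (i := true))
  have hcon' := φ.map_isConj hcon
  simp only [map_mul, φ, Coprod.lift_apply_inl, Coprod.lift_apply_inr] at hcon'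
  exact @Stmt4Aux.aux_main Bool instDecidableEqBool (Stmt4Fam G₁ G₂) _ _ false true (fun h => Bool.noConfusion h) g₁ g₂ h₁ h₂ hcon'
end

section
/- In the free product G = Z_{α₁} * Z_{α₂} of two finite cyclic groups of orders α₁, α₂ ≥ 3 with generators c₁, c₂, the commutator c₁ c₂ c₁⁻¹ c₂⁻¹ is not conjugate in G to any power (c₁ c₂)ˢ for s ∈ ℤ. -/
set_option linter.unusedSectionVars false

open Monoid Coprod

namespace Stmt6Aux

open Monoid.CoprodI

section WLen

variable {ι : Type*} [DecidableEq ι] {M : ι → Type*} [∀ i, Group (M i)]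
  [∀ i, DecidableEq (M i)]

/-- Length of the reduced word of an element of a free product. -/
noncomputable def wlen (g : CoprodI M) : ℕ := (Word.equiv g).toList.length

lemma equiv_prod (w : Word M) : Word.equiv (Word.prod w) = w :=
  Word.equiv.apply_symm_apply w

lemma wlen_prod (w : Word M) : wlen (Word.prod w) = w.toList.length := by
  rw [wlen, equiv_prod]

lemma wlen_one : wlen (1 : CoprodI M) = 0 := by
  simpa using wlen_prod (Word.empty : Word M)

lemma rcons_length_le {i : ι} (p : Word.Pair M i) :
    (Word.rcons p).toList.length ≤ p.tail.toList.length + 1 := by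
  rw [Word.rcons]
  split <;> simp

lemma tail_length_le {i : ι} (w : Word M) :
    (Word.equivPair i w).tail.toList.length ≤ w.toList.length := by
  conv_rhs => rw [← (Word.equivPair i).symm_apply_apply w]
  rw [Word.equivPair_symm, Word.rcons]
  split <;> simp

lemma smul_letter_length_le {i : ι} (m : M i) (w : Word M) :
    (CoprodI.of m • w).toList.length ≤ w.toList.length + 1 := by
  rw [Word.of_smul_def]
  refine le_trans (rcons_length_le _) ?_
  exact Nat.add_le_add_right (tail_length_le w) 1

lemma list_smul_length_le : ∀ (l : List (Σ i, M i)) (w : Word M),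
    ((List.prod (l.map fun p => CoprodI.of p.2)) • w).toList.length
      ≤ l.length + w.toList.length
  | [], w => by simp
  | p :: l, w => by
      rw [List.map_cons, List.prod_cons, mul_smul]
      refine le_trans (smul_letter_length_le p.2 _) ?_
      have := list_smul_length_le l w
      simp only [List.length_cons]
      omega

lemma wlen_mul_le (g h : CoprodI M) : wlen (g * h) ≤ wlen g + wlen h := by
  have kdef : ∀ x : CoprodI M, Word.equiv x = x • Word.empty := fun _ => rfl
  have key : Word.equiv (g * h) = g • Word.equiv h := by
    rw [kdef, kdef, mul_smul]
  have hg : List.prod (((Word.equiv g).toList).map fun p => CoprodI.of p.2) = g := by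
    show Word.prod (Word.equiv g) = g
    exact Word.equiv.symm_apply_apply g
  rw [wlen, key]
  conv_lhs => rw [← hg]
  exact list_smul_length_le _ _

/-- `n+1`-fold repetition of a nonempty word. -/
def npow {i j : ι} (hji : j ≠ i) (w : NeWord M i j) : ℕ → NeWord M i j
  | 0 => w
  | n + 1 => NeWord.append (npow hji w n) hji w

lemma npow_prod {i j : ι} (hji : j ≠ i) (w : NeWord M i j) (n : ℕ) :
    (npow hji w n).prod = w.prod ^ (n + 1) := by
  induction n with
  | zero => simp [npow]
  | succ n ih => simp [npow, pow_succ, ih]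

lemma npow_length {i j : ι} (hji : j ≠ i) (w : NeWord M i j) (n : ℕ) :
    (npow hji w n).toList.length = (n + 1) * w.toList.length := by
  induction n with
  | zero => simp [npow]
  | succ n ih =>
      simp only [npow, NeWord.toList, List.length_append, ih]
      ring

lemma wlen_neword {i j : ι} (w : NeWord M i j) : wlen w.prod = w.toList.length :=
  wlen_prod w.toWord

end WLen

/-- A `Bool`-indexed family packaging two groups. -/
def Fam (M N : Type) : Bool → Type := fun b => Bool.rec N M b

instance famGroup {M N : Type} [Group M] [Group N] : ∀ b, Group (Fam M N b)
  | true => ‹Group M›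
  | false => ‹Group N›

instance famDecEq {M N : Type} [DecidableEq M] [DecidableEq N] :
    ∀ b, DecidableEq (Fam M N b)
  | true => ‹DecidableEq M›
  | false => ‹DecidableEq N›

/-- The canonical homomorphism from the binary coproduct to the indexed coproduct. -/
def toCoprodI {M N : Type} [Group M] [Group N] : M ∗ N →* CoprodI (Fam M N) :=
  Coprod.lift (@CoprodI.of Bool (Fam M N) _ true) (@CoprodI.of Bool (Fam M N) _ false)

@[simp] lemma toCoprodI_inl {M N : Type} [Group M] [Group N] (m : M) :
    toCoprodI (Coprod.inl m : M ∗ N) = @CoprodI.of Bool (Fam M N) _ true m :=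
  Coprod.lift_apply_inl _ _ m

@[simp] lemma toCoprodI_inr {M N : Type} [Group M] [Group N] (n : N) :
    toCoprodI (Coprod.inr n : M ∗ N) = @CoprodI.of Bool (Fam M N) _ false n :=
  Coprod.lift_apply_inr _ _ n

end Stmt6Aux


open Stmt6Aux Monoid.CoprodI

/-- In the free product `G = ℤ/α₁ ∗ ℤ/α₂` of two finite cyclic groups of
orders `α₁, α₂ ≥ 3`, with distinguished generators `c₁`, `c₂`, the commutator
`c₁ c₂ c₁⁻¹ c₂⁻¹` is not conjugate in `G` to any power `(c₁ c₂)ˢ`, `s ∈ ℤ`. -/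
theorem stmt_6 (α₁ α₂ : ℕ) (h₁ : 3 ≤ α₁) (h₂ : 3 ≤ α₂) (s : ℤ) :
    ¬ IsConj
      ((inl (Multiplicative.ofAdd (1 : ZMod α₁)) :
          Multiplicative (ZMod α₁) ∗ Multiplicative (ZMod α₂)) *
        inr (Multiplicative.ofAdd (1 : ZMod α₂)) *
        (inl (Multiplicative.ofAdd (1 : ZMod α₁)))⁻¹ *
        (inr (Multiplicative.ofAdd (1 : ZMod α₂)))⁻¹)
      (((inl (Multiplicative.ofAdd (1 : ZMod α₁)) :
          Multiplicative (ZMod α₁) ∗ Multiplicative (ZMod α₂)) *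
        inr (Multiplicative.ofAdd (1 : ZMod α₂))) ^ s) := by
  intro hconj
  haveI : NeZero α₁ := ⟨by omega⟩
  haveI : NeZero α₂ := ⟨by omega⟩
  set X := Multiplicative (ZMod α₁) with hX
  set Y := Multiplicative (ZMod α₂) with hY
  set g : X := Multiplicative.ofAdd (1 : ZMod α₁) with hgdef
  set h : Y := Multiplicative.ofAdd (1 : ZMod α₂) with hhdef
  -- Step 1: abelianization, first factor
  have habs : g ^ s = 1 := by
    have h1 := (Coprod.fst.map_isConj hconj)
    rw [isConj_iff_eq] at h1
    simpa [map_mul, map_inv, map_zpow] using h1.symm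
  have hdvd : (α₁ : ℤ) ∣ s := by
    have hz : (s : ZMod α₁) = 0 := by
      have h2 : Multiplicative.toAdd (g ^ s) = Multiplicative.toAdd (1 : X) :=
        congrArg _ habs
      rw [toAdd_zpow] at h2
      simpa [hgdef, zsmul_eq_mul] using h2
    exact (ZMod.intCast_zmod_eq_zero_iff_dvd s α₁).1 hz
  set k := s.natAbs with hkdef
  have hkdvd : α₁ ∣ k := by
    have := Int.natAbs_dvd_natAbs.mpr hdvd
    simpa using this
  have hk : k = 0 ∨ 3 ≤ k := by
    rcases Nat.eq_zero_or_pos k with h0 | hpos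
    · exact Or.inl h0
    · exact Or.inr (le_trans h₁ (Nat.le_of_dvd hpos hkdvd))
  -- Step 2: move to the indexed coproduct
  have hg1 : g ≠ 1 := by
    intro hcon
    have := congrArg Multiplicative.toAdd hcon
    simp only [toAdd_ofAdd, toAdd_one] at this
    have : ((1 : ℕ) : ZMod α₁) = 0 := by exact_mod_cast this
    have hdd := (ZMod.natCast_eq_zero_iff 1 α₁).1 this
    have := Nat.le_of_dvd (by norm_num) hdd
    omega
  have hh1 : h ≠ 1 := by
    intro hcon
    have := congrArg Multiplicative.toAdd hcon
    simp only [toAdd_ofAdd, toAdd_one] at this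
    have : ((1 : ℕ) : ZMod α₂) = 0 := by exact_mod_cast this
    have hdd := (ZMod.natCast_eq_zero_iff 1 α₂).1 this
    have := Nat.le_of_dvd (by norm_num) hdd
    omega
  have hg1' : (g⁻¹ : X) ≠ 1 := inv_ne_one.mpr hg1
  have hh1' : (h⁻¹ : Y) ≠ 1 := inv_ne_one.mpr hh1
  classical
  set F := Fam X Y with hF
  set φ : X ∗ Y →* CoprodI F := toCoprodI with hφ
  set a : CoprodI F := CoprodI.of (i := true) (g : F true) with hadef
  set b : CoprodI F := CoprodI.of (i := false) (h : F false) with hbdef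
  obtain ⟨t, ht⟩ := isConj_iff.1 hconj
  have hT : φ t * (a * b * a⁻¹ * b⁻¹) * (φ t)⁻¹ = (a * b) ^ s := by
    have := congrArg φ ht
    have e1 : φ (inl g) = a := toCoprodI_inl g
    have e2 : φ (inr h) = b := toCoprodI_inr h
    have e3 : φ (inl g)⁻¹ = a⁻¹ := (map_inv φ _).trans (congrArg _ e1)
    have e4 : φ (inr h)⁻¹ = b⁻¹ := (map_inv φ _).trans (congrArg _ e2)
    simpa [map_mul, map_inv, map_zpow, e1, e2, e3, e4] using this
  set T := φ t with hTdef
  -- nonempty words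
  have htf : (true : Bool) ≠ false := by decide
  have hft : (false : Bool) ≠ true := by decide
  set w2 : NeWord F true false :=
    NeWord.append (NeWord.singleton (g : F true) hg1) htf
      (NeWord.singleton (h : F false) hh1) with hw2
  set w2' : NeWord F false true :=
    NeWord.append (NeWord.singleton (h⁻¹ : F false) hh1') hft
      (NeWord.singleton (g⁻¹ : F true) hg1') with hw2'
  set w4 : NeWord F true false :=
    NeWord.append
      (NeWord.append
        (NeWord.append (NeWord.singleton (g : F true) hg1) htf
          (NeWord.singleton (h : F false) hh1))
        hft (NeWord.singleton (g⁻¹ : F true) hg1'))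
      htf (NeWord.singleton (h⁻¹ : F false) hh1') with hw4
  have hw2prod : w2.prod = a * b := by
    simp [hw2, hadef, hbdef]
    exact congrArg₂ _ (NeWord.prod_singleton _ _) (NeWord.prod_singleton _ _)
  have hw2'prod : w2'.prod = (a * b)⁻¹ := by
    simp [hw2', hadef, hbdef, mul_inv_rev]
    exact congrArg₂ _ ((NeWord.prod_singleton _ _).trans (map_inv _ _)) ((NeWord.prod_singleton _ _).trans (map_inv _ _))
  have hw4prod : w4.prod = a * b * a⁻¹ * b⁻¹ := by
    simp [hw4, hadef, hbdef, mul_assoc]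
    exact congrArg₂ _ (NeWord.prod_singleton _ _) (congrArg₂ _ (NeWord.prod_singleton _ _) (congrArg₂ _ ((NeWord.prod_singleton _ _).trans (map_inv _ _)) ((NeWord.prod_singleton _ _).trans (map_inv _ _))))
  have hw2len : w2.toList.length = 2 := by simp [hw2]
  have hw2'len : w2'.toList.length = 2 := by simp [hw2']
  have hw4len : w4.toList.length = 4 := by simp [hw4]
  -- length computations
  have len4 : ∀ n : ℕ, wlen ((a * b * a⁻¹ * b⁻¹) ^ (n + 1)) = 4 * (n + 1) := by
    intro n
    rw [← hw4prod, ← npow_prod hft w4 n, wlen_neword, npow_length, hw4len]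
    ring
  have len2 : ∀ m : ℤ, wlen ((a * b) ^ m) = 2 * m.natAbs := by
    intro m
    rcases m with n | n
    · cases n with
      | zero => simpa using wlen_one
      | succ n =>
          rw [Int.ofNat_eq_coe, zpow_natCast, ← hw2prod, ← npow_prod hft w2 n,
            wlen_neword, npow_length, hw2len]
          omega
    · rw [zpow_negSucc, ← inv_pow, ← hw2'prod, ← npow_prod htf w2' n,
        wlen_neword, npow_length, hw2'len]
      rw [Int.natAbs_negSucc]
      omega
  -- conjugation of powers
  have hconjpow : ∀ n : ℕ, T * (a * b * a⁻¹ * b⁻¹) ^ (n + 1) * T⁻¹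
      = (a * b) ^ (s * (n + 1)) := by
    intro n
    have base : ∀ m : ℕ, T * (a * b * a⁻¹ * b⁻¹) ^ m * T⁻¹ = ((a * b) ^ s) ^ m := by
      intro m
      induction m with
      | zero => simp
      | succ m ih =>
          rw [pow_succ, pow_succ, ← ih, ← hT]
          group
    rw [base (n + 1), ← zpow_natCast ((a * b) ^ s), ← zpow_mul]
    norm_num
  set C := wlen T + wlen T⁻¹ with hC
  have ineq1 : ∀ n : ℕ, 2 * (k * (n + 1)) ≤ C + 4 * (n + 1) := by
    intro n
    have he := hconjpow n
    have : wlen ((a * b) ^ (s * (n + 1))) ≤ C + 4 * (n + 1) := by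
      rw [← he]
      calc wlen (T * (a * b * a⁻¹ * b⁻¹) ^ (n + 1) * T⁻¹)
          ≤ wlen (T * (a * b * a⁻¹ * b⁻¹) ^ (n + 1)) + wlen T⁻¹ := wlen_mul_le _ _
        _ ≤ wlen T + wlen ((a * b * a⁻¹ * b⁻¹) ^ (n + 1)) + wlen T⁻¹ :=
            Nat.add_le_add_right (wlen_mul_le _ _) _
        _ = C + 4 * (n + 1) := by rw [len4]; omega
    rw [len2] at this
    have h5 : ((n : ℤ) + 1).natAbs = n + 1 := by omega
    have hnat : (s * ((n : ℤ) + 1)).natAbs = k * (n + 1) := by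
      rw [Int.natAbs_mul, h5, hkdef]
    omega
  have ineq2 : ∀ n : ℕ, 4 * (n + 1) ≤ C + 2 * (k * (n + 1)) := by
    intro n
    have he := hconjpow n
    have heq : (a * b * a⁻¹ * b⁻¹) ^ (n + 1) = T⁻¹ * (a * b) ^ (s * (n + 1)) * T := by
      rw [← he]; group
    have : wlen ((a * b * a⁻¹ * b⁻¹) ^ (n + 1)) ≤ C + 2 * (s * ((n : ℤ) + 1)).natAbs := by
      rw [heq]
      calc wlen (T⁻¹ * (a * b) ^ (s * (n + 1)) * T)
          ≤ wlen (T⁻¹ * (a * b) ^ (s * (n + 1))) + wlen T := wlen_mul_le _ _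
        _ ≤ wlen T⁻¹ + wlen ((a * b) ^ (s * (n + 1))) + wlen T :=
            Nat.add_le_add_right (wlen_mul_le _ _) _
        _ = C + 2 * (s * ((n : ℤ) + 1)).natAbs := by rw [len2]; omega
    rw [len4] at this
    have h5 : ((n : ℤ) + 1).natAbs = n + 1 := by omega
    have hnat : (s * ((n : ℤ) + 1)).natAbs = k * (n + 1) := by
      rw [Int.natAbs_mul, h5, hkdef]
    omega
  rcases hk with hk0 | hk3
  · have := ineq2 C
    rw [hk0] at this
    omega
  · have h6 := ineq1 C
    have : 2 * (3 * (C + 1)) ≤ 2 * (k * (C + 1)) :=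
      Nat.mul_le_mul_left _ (Nat.mul_le_mul_right _ hk3)
    omega
end

section
/- Tree-of-groups injectivity lemma for a single amalgamation: let G = G₁ *_H G₂ be an amalgamated free product with injective structure maps. Suppose a, b ∈ G₁ represent distinct conjugacy classes of G₁, and a is not conjugate in G₁ to any element of the image of H in G₁. Then a and b represent distinct conjugacy classes of G. -/
open Monoid Monoid.PushoutI Monoid.PushoutI.NormalWord Function

namespace Stmt8Aux

variable {H : Type} [Group H] {G : Bool → Type} [∀ b, Group (G b)]
  {φ : ∀ b, H →* G b}

lemma prod_toList (u : CoprodI.Word G) :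
    u.prod = (u.toList.map fun l => CoprodI.of l.snd).prod := rfl

lemma sandwich (i : Bool) (x : G i) (hx : x ∉ (φ i).range)
    (v : CoprodI.Word G) (hred : Reduced φ v) (hne : v.toList ≠ [])
    (hfst : v.fstIdx = some (!i))
    (hlast : v.toList.getLast?.map Sigma.fst = some (!i)) :
    ∃ u : CoprodI.Word G, Reduced φ u ∧ u.fstIdx = some i ∧
      u.toList.getLast?.map Sigma.fst = some i ∧ 3 ≤ u.toList.length ∧
      ofCoprodI u.prod =
        of (φ := φ) i x * ofCoprodI v.prod * (of (φ := φ) i x)⁻¹ := by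
  have hx1 : x ≠ 1 := fun h => hx (h ▸ one_mem _)
  have hxinv : x⁻¹ ∉ (φ i).range := fun h => hx (by simpa using inv_mem h)
  obtain ⟨l₀, t, hl⟩ := List.exists_cons_of_ne_nil hne
  have hl₀ : l₀.1 = !i := by
    rw [CoprodI.Word.fstIdx, hl] at hfst
    simpa using hfst
  obtain ⟨ll, hll, hlll⟩ : ∃ ll, v.toList.getLast? = some ll ∧ ll.1 = !i := by
    rcases h : v.toList.getLast? with _ | ll
    · rw [h] at hlast; simp at hlast
    · rw [h] at hlast; simp at hlast; exact ⟨ll, rfl, hlast⟩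
  refine ⟨⟨(⟨i, x⟩ :: v.toList) ++ [⟨i, x⁻¹⟩], ?_, ?_⟩, ?_, ?_, ?_, ?_, ?_⟩
  · intro l hli
    simp only [List.mem_append, List.mem_cons] at hli
    rcases hli with (rfl | hli) | (rfl | hli)
    · exact hx1
    · exact v.ne_one l hli
    · simpa using hx1
    · exact absurd hli List.not_mem_nil
  · rw [List.isChain_append]
    refine ⟨?_, List.isChain_singleton _, ?_⟩
    · rw [List.isChain_cons]
      refine ⟨?_, v.chain_ne⟩
      intro y hy
      rw [hl] at hy
      simp at hy
      subst hy
      rw [hl₀]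
      simp
    · intro y hy z hz
      simp at hz
      subst hz
      rw [hl, List.getLast?_cons_cons, ← hl, hll] at hy
      simp at hy
      subst hy
      rw [hlll]
      simp
  · intro l hli
    simp only [List.mem_append, List.mem_cons] at hli
    rcases hli with (rfl | hli) | (rfl | hli)
    · exact hx
    · exact hred l hli
    · exact hxinv
    · exact absurd hli List.not_mem_nil
  · rfl
  · simp only [List.getLast?_concat]
    rfl
  · simp only [List.length_append, List.length_cons, List.length_singleton]
    have := List.length_pos_iff.2 hne
    omega
  · rw [prod_toList]
    simp only [List.map_append, List.map_cons, List.prod_append, List.prod_cons,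
      List.map_nil, List.prod_nil, mul_one]
    rw [← prod_toList v]
    simp [map_mul, map_inv, ofCoprodI_of, mul_assoc]

lemma not_of_range (hφ : ∀ b, Function.Injective (φ b))
    (v : CoprodI.Word G) (hred : Reduced φ v) (hne : v.toList ≠ [])
    (hfst : v.fstIdx = some false) (z : G true) :
    ofCoprodI v.prod ≠ of (φ := φ) true z := by
  intro heq
  by_cases hz : z ∈ (φ true).range
  · obtain ⟨h0, rfl⟩ := hz
    have hmem : ofCoprodI v.prod ∈ (base φ).range :=
      ⟨h0, by rw [heq, of_apply_eq_base]⟩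
    have := hred.eq_empty_of_mem_range hφ hmem
    exact hne (by rw [this]; rfl)
  · have hz1 : z⁻¹ ≠ 1 := by
      intro h
      rw [inv_eq_one] at h
      exact hz (h ▸ one_mem _)
    have hfstne : v.fstIdx ≠ some true := by rw [hfst]; simp
    set v₂ := CoprodI.Word.cons (i := true) z⁻¹ v hfstne hz1 with hv₂
    have hred₂ : Reduced φ v₂ := by
      intro l hli
      simp only [hv₂, CoprodI.Word.cons, List.mem_cons] at hli
      rcases hli with rfl | hli
      · exact fun h => hz (by simpa using inv_mem h)
      · exact hred l hli
    have hmem : ofCoprodI v₂.prod ∈ (base φ).range := by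
      refine ⟨1, ?_⟩
      rw [CoprodI.Word.prod_cons]
      simp [heq, map_mul]
    have := hred₂.eq_empty_of_mem_range hφ hmem
    have : v₂.toList = [] := by rw [this]; rfl
    simp [hv₂, CoprodI.Word.cons] at this

lemma key (hφ : ∀ b, Function.Injective (φ b)) (a : G true)
    (ha : ∀ h : H, ¬ IsConj a (φ true h)) (w : CoprodI.Word G) :
    Reduced φ w → ∀ c : G true, IsConj a c →
    (∃ c', IsConj a c' ∧
      ofCoprodI w.prod * of (φ := φ) true c * (ofCoprodI w.prod)⁻¹ =
        of (φ := φ) true c') ∨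
    (∃ v : CoprodI.Word G, Reduced φ v ∧ ∃ j : Bool, w.fstIdx = some j ∧
      v.fstIdx = some j ∧ v.toList.getLast?.map Sigma.fst = some j ∧
      3 ≤ v.toList.length ∧
      ofCoprodI v.prod =
        ofCoprodI w.prod * of (φ := φ) true c * (ofCoprodI w.prod)⁻¹) := by
  induction w using CoprodI.Word.consRecOn with
  | empty =>
    intro _ c hc
    left
    exact ⟨c, hc, by simp⟩
  | cons i m w' h1 h2 ih =>
    intro hred c hc
    have hm : m ∉ (φ i).range := hred ⟨i, m⟩ List.mem_cons_self
    have hred' : Reduced φ w' := fun l hl => hred l (List.mem_cons_of_mem _ hl)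
    have hEQ : ofCoprodI (CoprodI.Word.cons m w' h1 h2).prod * of (φ := φ) true c *
        (ofCoprodI (CoprodI.Word.cons m w' h1 h2).prod)⁻¹ =
        of (φ := φ) i m *
          (ofCoprodI w'.prod * of (φ := φ) true c * (ofCoprodI w'.prod)⁻¹) *
          (of (φ := φ) i m)⁻¹ := by
      rw [CoprodI.Word.prod_cons, map_mul, ofCoprodI_of]
      group
    rcases ih hred' c hc with ⟨c', hc', heq⟩ | ⟨v, hvred, j, hwfst, hvfst, hvlast, hvlen, heq⟩
    · cases i with
      | true =>
        left
        refine ⟨m * c' * m⁻¹, hc'.trans (isConj_iff.mpr ⟨m, rfl⟩), ?_⟩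
        rw [hEQ, heq]
        simp [map_mul, mul_assoc]
      | false =>
        right
        have hc'r : c' ∉ (φ true).range := by
          rintro ⟨h0, rfl⟩
          exact ha h0 hc'
        have hc'1 : c' ≠ 1 := fun h => hc'r (h ▸ one_mem _)
        set s : CoprodI.Word G :=
          ⟨[⟨true, c'⟩], by simpa using hc'1, List.isChain_singleton _⟩ with hs
        have hsred : Reduced φ s := by
          intro l hl
          simp only [hs, List.mem_singleton] at hl
          subst hl
          exact hc'r
        obtain ⟨u, hured, hufst, hulast, hulen, huprod⟩ :=
          sandwich false m hm s hsred (by simp [hs]) rfl rfl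
        refine ⟨u, hured, false, CoprodI.Word.fstIdx_cons _ _ _ _, hufst, hulast, hulen, ?_⟩
        have hsprod : ofCoprodI s.prod = of (φ := φ) true c' := by
          rw [prod_toList]
          simp [hs]
        rw [huprod, hsprod, hEQ, heq]
    · right
      have hji : j ≠ i := by
        intro h
        exact h1 (by rw [hwfst, h])
      have hj : j = !i := by cases i <;> cases j <;> simp_all
      subst hj
      have hne : v.toList ≠ [] := by
        intro h
        rw [h] at hvlen
        simp at hvlen
      obtain ⟨u, hured, hufst, hulast, hulen, huprod⟩ :=
        sandwich i m hm v hvred hne hvfst hvlast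
      refine ⟨u, hured, i, CoprodI.Word.fstIdx_cons _ _ _ _, hufst, hulast, hulen, ?_⟩
      rw [huprod, heq, hEQ]



lemma reduced_of_normalWord {d : Transversal φ} (n : NormalWord d) :
    Reduced φ n.toWord := by
  rintro ⟨i, x⟩ hl ⟨h0, hh⟩
  have hset : x ∈ d.set i := n.normalized i x hl
  have hne1 : x ≠ 1 := n.toWord.ne_one ⟨i, x⟩ hl
  have hxR : x ∈ ((φ i).range : Set (G i)) := ⟨h0, hh⟩
  have h1R : (1 : G i) ∈ ((φ i).range : Set (G i)) := ⟨1, map_one _⟩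
  have h12 := (d.compl i).1
    (a₁ := (⟨⟨x, hxR⟩, ⟨1, d.one_mem i⟩⟩ : ((φ i).range : Set (G i)) × d.set i))
    (a₂ := ⟨⟨1, h1R⟩, ⟨x, hset⟩⟩) (by simp)
  exact hne1 (by simpa using congrArg (fun p => (p.1 : G i)) h12)

end Stmt8Aux

open Stmt8Aux in
/-- (Injectivity lemma for one amalgamation.) Let `G = G₁ *_H G₂` be an
amalgamated free product with injective structure maps (`PushoutI φ` over `Bool`, with
`G₁ = G true`).  If `a, b ∈ G₁` are not conjugate in `G₁`, and `a` is not conjugate in `G₁`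
to any element of the image of `H`, then the images of `a` and `b` are not conjugate in `G`. -/
theorem stmt_8 {H : Type} [Group H] (G : Bool → Type) [∀ b, Group (G b)]
    (φ : ∀ b, H →* G b) (hφ : ∀ b, Function.Injective (φ b))
    (a b : G true) (hab : ¬ IsConj a b)
    (ha : ∀ h : H, ¬ IsConj a (φ true h)) :
    ¬ IsConj (PushoutI.of (φ := φ) true a) (PushoutI.of (φ := φ) true b) := by
  intro hconj
  obtain ⟨g, hg⟩ := isConj_iff.mp hconj
  classical
  obtain ⟨d⟩ := Monoid.PushoutI.NormalWord.transversal_nonempty φ hφ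
  set n : Monoid.PushoutI.NormalWord d :=
    Monoid.PushoutI.NormalWord.equiv g with hn
  have hgn : n.prod = g := Monoid.PushoutI.NormalWord.equiv.symm_apply_apply g
  have hnp : n.prod = Monoid.PushoutI.base φ n.head *
      Monoid.PushoutI.ofCoprodI n.toWord.prod := rfl
  have hwred : Monoid.PushoutI.Reduced φ n.toWord := reduced_of_normalWord n
  set b₁ := (φ true n.head)⁻¹ * b * (φ true n.head) with hb₁def
  have hb1 : Monoid.PushoutI.ofCoprodI n.toWord.prod *
      Monoid.PushoutI.of (φ := φ) true a *
      (Monoid.PushoutI.ofCoprodI n.toWord.prod)⁻¹ =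
      Monoid.PushoutI.of (φ := φ) true b₁ := by
    have h2 : Monoid.PushoutI.of (φ := φ) true b₁ =
        (Monoid.PushoutI.base φ n.head)⁻¹ *
          Monoid.PushoutI.of (φ := φ) true b * Monoid.PushoutI.base φ n.head := by
      rw [hb₁def, map_mul, map_mul, map_inv, Monoid.PushoutI.of_apply_eq_base]
    rw [h2, ← hg, ← hgn, hnp]
    group
  have hb₁conj : IsConj b₁ b := isConj_iff.mpr ⟨φ true n.head, by rw [hb₁def]; group⟩
  rcases key hφ a ha n.toWord hwred a (IsConj.refl a) with
    ⟨c', hc', heq⟩ | ⟨v, hvred, j, hwfst, hvfst, hvlast, hvlen, heq⟩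
  · rw [hb1] at heq
    have hcb : c' = b₁ := (Monoid.PushoutI.of_injective hφ true heq).symm
    exact hab ((hcb ▸ hc').trans hb₁conj)
  · rw [hb1] at heq
    have hne : v.toList ≠ [] := by
      intro h
      rw [h] at hvlen
      simp at hvlen
    cases j with
    | false => exact not_of_range hφ v hvred hne hvfst b₁ heq
    | true =>
      obtain ⟨l₀, rest, hl⟩ := List.exists_cons_of_ne_nil hne
      obtain ⟨i₀, y⟩ := l₀
      have hi₀ : i₀ = true := by
        rw [Monoid.CoprodI.Word.fstIdx, hl] at hvfst
        simpa using hvfst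
      subst hi₀
      have hrest : rest ≠ [] := by
        intro h
        rw [hl, h] at hvlen
        simp at hvlen
      obtain ⟨r₀, rest', hr⟩ := List.exists_cons_of_ne_nil hrest
      have hchain := v.chain_ne
      rw [hl, hr] at hchain
      have hr₀ : r₀.1 = false := by
        have h' := (List.isChain_cons_cons.mp hchain).1
        revert h'
        cases r₀.1 <;> simp
      set v' : Monoid.CoprodI.Word G :=
        ⟨rest, fun l h => v.ne_one l (by rw [hl]; exact List.mem_cons_of_mem _ h), by
          have hc := v.chain_ne
          rw [hl] at hc
          exact hc.tail⟩ with hv'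
      have hv'red : Monoid.PushoutI.Reduced φ v' :=
        fun l h => hvred l (by rw [hl]; exact List.mem_cons_of_mem _ h)
      have hv'fst : v'.fstIdx = some false := by
        show Option.map Sigma.fst rest.head? = some false
        rw [hr]
        simp [hr₀]
      have hvp : v.prod = Monoid.CoprodI.of y * v'.prod := by
        rw [prod_toList v, prod_toList v', hl]
        rfl
      have hfin : Monoid.PushoutI.ofCoprodI v'.prod =
          Monoid.PushoutI.of (φ := φ) true (y⁻¹ * b₁) := by
        rw [hvp] at heq
        rw [map_mul] at heq
        rw [Monoid.PushoutI.ofCoprodI_of] at heq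
        rw [map_mul, map_inv]
        rw [← heq]
        group
      exact not_of_range hφ v' hv'red hrest hv'fst (y⁻¹ * b₁) hfin
end
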